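/- arXiv:2212.06465 — 4 statements merged into one kernel-verified Lean document; each statement's English description precedes it below -/
import Mathlib

section
/- Let 0 < a < b and K ∈ (0,1) be given. Then there exists K'₀ ∈ (0,1) such that for every K' ∈ (0,K'₀) there exist constants m̃ ∈ (0,1) and m* ∈ (1,∞) with: F(m,r) > 0 for all m ∈ (m̃,1) and all r ∈ [a,b], and F(m,r) < 0 for all m ∈ (1,m*) and all r ∈ [a,b]. -/
/-!
Since `F(1, r) = 0`, only the first-order behaviour of `F` in `m` near `1` matters. The part
`(r+K)^m - r^m - K` is Lipschitz in `m` near `1` with a constant `C` depending only on `a`, `b`,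
while `(1-K)(K'^(m-1) - 1) = (1-K)(exp((m-1) log K') - 1)` behaves like `(1-K)(m-1) log K'`,
whose slope `(1-K) log K'` tends to `-∞` as `K' → 0`. Once `(1-K)|log K'| > 2C`, the second
part dominates on both sides of `m = 1`, uniformly in `r ∈ [a,b]`.
-/

open Set

/-- For parameters `K, K' ∈ (0,1)`, the function
`F(m,r) := (r+K)^m + (1−K)·K'^(m−1) − r^m − 1` (real powers). -/
noncomputable def Ffun (K K' m r : ℝ) : ℝ :=
  (r + K) ^ m + (1 - K) * K' ^ (m - 1) - r ^ m - 1

open Real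

lemma Real.exp_le_one_add_half {x : ℝ} (hx₁ : -(1 / 2) ≤ x) (hx₀ : x ≤ 0) :
    exp x ≤ 1 + x / 2 := by
  have h := abs_le.1 (abs_exp_sub_one_sub_id_le (x := x) (abs_le.2 ⟨by linarith, by linarith⟩))
  nlinarith [h.2]

lemma Real.abs_log_le_max_of_mem_Icc {a c x : ℝ} (ha : 0 < a) (hx : x ∈ Icc a c) :
    |log x| ≤ max (-log a) (log c) := by
  have hx₀ : 0 < x := ha.trans_le hx.1
  refine abs_le.2 ⟨?_, (log_le_log hx₀ hx.2).trans (le_max_right _ _)⟩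
  linarith [log_le_log ha hx.1, le_max_left (-log a) (log c)]

lemma Real.lt_mul_neg_log_of_lt_exp {y D ε : ℝ} (hy : 0 < y) (hε : 0 < ε)
    (h : y < exp (-D / ε)) : D < ε * -log y := by
  have h' := log_lt_log hy h
  rw [log_exp, lt_div_iff₀ hε] at h'
  linarith

lemma Real.abs_rpow_sub_self_le {x m : ℝ} (hx : 0 < x) (hm : |m - 1| * |log x| ≤ 1) :
    |x ^ m - x| ≤ 2 * x * |log x| * |m - 1| := by
  have hsplit : x ^ m - x = x * (exp (log x * (m - 1)) - 1) := by
    rw [← rpow_def_of_pos hx, rpow_sub_one hx.ne']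
    field_simp
  have hexp := abs_exp_sub_one_le (x := log x * (m - 1)) (by rwa [abs_mul, mul_comm])
  calc |x ^ m - x| = x * |exp (log x * (m - 1)) - 1| := by rw [hsplit, abs_mul, abs_of_pos hx]
    _ ≤ x * (2 * |log x * (m - 1)|) := by gcongr
    _ = 2 * x * |log x| * |m - 1| := by rw [abs_mul]; ring

lemma Real.abs_rpow_sub_self_le_of_mem_Icc {a c x m Λ : ℝ} (ha : 0 < a) (hx : x ∈ Icc a c)
    (hΛ : ∀ y ∈ Icc a c, |log y| ≤ Λ) (hm : |m - 1| * Λ ≤ 1) :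
    |x ^ m - x| ≤ 2 * c * Λ * |m - 1| := by
  have hx₀ : 0 < x := ha.trans_le hx.1
  have hlog := hΛ x hx
  calc |x ^ m - x| ≤ 2 * x * |log x| * |m - 1| :=
        abs_rpow_sub_self_le hx₀ (le_trans (by gcongr) hm)
    _ ≤ 2 * c * Λ * |m - 1| := by gcongr <;> linarith [hx.1, hx.2]

lemma Real.abs_add_rpow_sub_rpow_sub_le {a c K r m Λ : ℝ} (ha : 0 < a) (hK : 0 ≤ K)
    (hr : a ≤ r) (hrK : r + K ≤ c) (hΛ : ∀ y ∈ Icc a c, |log y| ≤ Λ)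
    (hm : |m - 1| * Λ ≤ 1) :
    |(r + K) ^ m - r ^ m - K| ≤ 4 * c * Λ * |m - 1| := by
  have h₁ := abs_rpow_sub_self_le_of_mem_Icc ha ⟨by linarith, hrK⟩ hΛ hm
  have h₂ := abs_rpow_sub_self_le_of_mem_Icc ha ⟨hr, by linarith⟩ hΛ hm
  calc |(r + K) ^ m - r ^ m - K| = |((r + K) ^ m - (r + K)) - (r ^ m - r)| := by ring_nf
    _ ≤ |(r + K) ^ m - (r + K)| + |r ^ m - r| := abs_sub _ _
    _ ≤ 4 * c * Λ * |m - 1| := by linarith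

lemma Ffun_eq {K K' m r : ℝ} (hK' : 0 < K') :
    Ffun K K' m r = ((r + K) ^ m - r ^ m - K) + (1 - K) * (exp (log K' * (m - 1)) - 1) := by
  rw [Ffun, rpow_def_of_pos hK']
  ring

lemma Ffun_pos {K K' m r C : ℝ} (hK : K < 1) (hK' : 0 < K') (hm : m < 1)
    (hG : |(r + K) ^ m - r ^ m - K| ≤ C * |m - 1|) (hC : C < (1 - K) * -log K') :
    0 < Ffun K K' m r := by
  rw [abs_of_neg (by linarith : m - 1 < 0)] at hG
  have hlin : (1 - K) * (log K' * (m - 1)) ≤ (1 - K) * (exp (log K' * (m - 1)) - 1) := by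
    gcongr
    linarith [add_one_le_exp (log K' * (m - 1))]
  have hgap : 0 < (1 - m) * ((1 - K) * -log K' - C) := mul_pos (by linarith) (by linarith)
  rw [Ffun_eq hK']
  nlinarith [(abs_le.1 hG).1]

lemma Ffun_neg {K K' m r C : ℝ} (hK : K < 1) (hK' : 0 < K') (hK'₁ : K' < 1) (hm : 1 < m)
    (hsmall : |m - 1| * -log K' ≤ 1 / 2) (hG : |(r + K) ^ m - r ^ m - K| ≤ C * |m - 1|)
    (hC : 2 * C < (1 - K) * -log K') :
    Ffun K K' m r < 0 := by
  rw [abs_of_pos (by linarith : 0 < m - 1)] at hG hsmall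
  have hlog : log K' < 0 := log_neg hK' hK'₁
  have hexp : (1 - K) * (exp (log K' * (m - 1)) - 1) ≤ (1 - K) * (log K' * (m - 1) / 2) := by
    gcongr
    linarith [exp_le_one_add_half (x := log K' * (m - 1)) (by linarith)
      (mul_nonpos_of_nonpos_of_nonneg hlog.le (by linarith))]
  have hgap : 0 < (m - 1) * ((1 - K) * -log K' - 2 * C) := mul_pos (by linarith) (by linarith)
  rw [Ffun_eq hK']
  nlinarith [(abs_le.1 hG).2]

/-- Lemma: for `0 < a < b` and `K ∈ (0,1)`, for all sufficiently small `K' ∈ (0,1)`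
there are `m̃ ∈ (0,1)` and `m* ∈ (1,∞)` such that `F(m,r) > 0` for `m ∈ (m̃,1)`,
`r ∈ [a,b]`, and `F(m,r) < 0` for `m ∈ (1,m*)`, `r ∈ [a,b]`. -/
theorem moment_sign_intervals (a b K : ℝ) (ha : 0 < a) (hab : a < b)
    (hK : K ∈ Ioo (0 : ℝ) 1) :
    ∃ K'₀ ∈ Ioo (0 : ℝ) 1, ∀ K' ∈ Ioo (0 : ℝ) K'₀,
      ∃ mt ∈ Ioo (0 : ℝ) 1, ∃ mstar ∈ Ioi (1 : ℝ),
        (∀ m ∈ Ioo mt 1, ∀ r ∈ Icc a b, 0 < Ffun K K' m r) ∧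
        (∀ m ∈ Ioo 1 mstar, ∀ r ∈ Icc a b, Ffun K K' m r < 0) := by
  obtain ⟨hK₀, hK₁⟩ := hK
  set Λ := max (-log a) (log (b + 1))
  have hΛ : 0 < Λ := lt_max_of_lt_right (log_pos (by linarith))
  set C := 4 * (b + 1) * Λ
  have hC : 0 < C := mul_pos (by linarith) hΛ
  have hG : ∀ m, |m - 1| * Λ ≤ 1 → ∀ r ∈ Icc a b,
      |(r + K) ^ m - r ^ m - K| ≤ C * |m - 1| := fun m hm r hr =>
    abs_add_rpow_sub_rpow_sub_le ha hK₀.le hr.1 (by linarith [hr.2])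
      (fun y hy => abs_log_le_max_of_mem_Icc ha hy) hm
  have hK'₀ : exp (-(2 * C) / (1 - K)) < 1 :=
    exp_lt_one_iff.2 (div_neg_of_neg_of_pos (by linarith) (by linarith))
  refine ⟨exp (-(2 * C) / (1 - K)), ⟨exp_pos _, hK'₀⟩, fun K' ⟨hK'pos, hK'lt⟩ => ?_⟩
  set L := -log K'
  have hL : 2 * C < (1 - K) * L := lt_mul_neg_log_of_lt_exp hK'pos (by linarith) hK'lt
  have hLpos : 0 < L := neg_pos.2 (log_neg hK'pos (hK'lt.trans hK'₀))
  set δ := 1 / (2 * (Λ + L) + 1)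
  have hδ : 0 < δ ∧ δ < 1 := ⟨by positivity, (div_lt_one (by positivity)).2 (by linarith)⟩
  have hsmall : ∀ m ∈ Ioo (1 - δ) (1 + δ), |m - 1| * Λ ≤ 1 ∧ |m - 1| * L ≤ 1 / 2 := by
    intro m hm
    have hm' : |m - 1| < δ := abs_sub_lt_iff.2 ⟨by linarith [hm.2], by linarith [hm.1]⟩
    have h := (lt_div_iff₀ (by positivity)).1 hm'
    constructor <;> nlinarith [abs_nonneg (m - 1)]
  refine ⟨1 - δ, ⟨by linarith, by linarith⟩, 1 + δ, by simpa using hδ.1, ?_, ?_⟩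
  · intro m hm r hr
    have hsm := hsmall m ⟨hm.1, by linarith [hm.2]⟩
    exact Ffun_pos hK₁ hK'pos hm.2 (hG m hsm.1 r hr) (by linarith)
  · intro m hm r hr
    have hsm := hsmall m ⟨by linarith [hm.1], hm.2⟩
    exact Ffun_neg hK₁ hK'pos (hK'lt.trans hK'₀) hm.1 hsm.2 (hG m hsm.1 r hr) hL
end

section
/- Let K, K' ∈ (0,1), α > 0, B > σ > 0, and let s be the compactly supported feeding preference function. Then there exists a constant C > 0, depending only on B, σ, K, K' and α, such that for every M > 0 and all measurable f¹, f² : (0,∞) → ℝ with ∫₀^∞ w^α |fⁱ(w)| dw ≤ M (i = 1,2) and w fⁱ ∈ L¹, one has ‖Q(f¹,f¹) − Q(f²,f²)‖_{L¹((0,∞), w dw)} ≤ C · M · ‖f¹ − f²‖_{L¹((0,∞), w dw)}. -/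
open Set MeasureTheory

/-- Compactly supported feeding preference function with preferred feeding ratio `B`
and diet breadth `σ`: `s(r) = σ⁻²·exp(−σ²/(σ² − (r−B)²))` on `(B−σ, B+σ)`, `0` otherwise. -/
noncomputable def sc (B σ r : ℝ) : ℝ :=
  if r ∈ Set.Ioo (B - σ) (B + σ) then (σ ^ 2)⁻¹ * Real.exp (-σ ^ 2 / (σ ^ 2 - (r - B) ^ 2)) else 0

/-- The predation operator `Q(f,f)` of the size-spectrum model with assimilation constant `K`,
offspring-production constant `K'`, search exponent `α` and compactly supported feeding
preference function `sc B σ`. -/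
noncomputable def Qop (K K' α B σ : ℝ) (f : ℝ → ℝ) (w : ℝ) : ℝ :=
  (∫ w' in Ioo (0 : ℝ) (w / K),
      (w - K * w') ^ α * sc B σ ((w - K * w') / w') * f (w - K * w') * f w')
  + ((1 - K) / K' ^ 2) *
      (∫ w' in Ioi (0 : ℝ), w' ^ α * sc B σ (K' * w' / w) * f (w / K') * f w')
  - (∫ w' in Ioi (0 : ℝ), (w ^ α * sc B σ (w / w') + w' ^ α * sc B σ (w' / w)) * (f w * f w'))

lemma sc_nonneg (B σ r : ℝ) : 0 ≤ sc B σ r := by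
  unfold sc; split <;> positivity

lemma sc_le (B σ r : ℝ) : sc B σ r ≤ (σ ^ 2)⁻¹ := by
  unfold sc; split
  · rename_i h
    obtain ⟨h1, h2⟩ := h
    have hd : 0 < σ ^ 2 - (r - B) ^ 2 := by nlinarith
    have he : Real.exp (-σ ^ 2 / (σ ^ 2 - (r - B) ^ 2)) ≤ 1 := by
      rw [Real.exp_le_one_iff]
      apply div_nonpos_of_nonpos_of_nonneg <;> nlinarith
    exact mul_le_of_le_one_right (by positivity) he
  · positivity

lemma sc_eq_zero (B σ r : ℝ) (h : r ∉ Set.Ioo (B - σ) (B + σ)) : sc B σ r = 0 := by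
  unfold sc; rw [if_neg h]

@[fun_prop]
lemma sc_measurable (B σ : ℝ) : Measurable (sc B σ) := by
  unfold sc
  apply Measurable.ite measurableSet_Ioo <;> fun_prop

lemma ofReal_abs_integral_sub_le {X : Type*} [MeasurableSpace X] (μ : Measure X) (u v : X → ℝ)
    (hu : AEStronglyMeasurable u μ) (hv : AEStronglyMeasurable v μ) :
    ENNReal.ofReal |(∫ x, u x ∂μ) - ∫ x, v x ∂μ| ≤ ∫⁻ x, ENNReal.ofReal |u x - v x| ∂μ := by
  by_cases hfin : ∫⁻ x, ENNReal.ofReal |u x - v x| ∂μ = ⊤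
  · simp [hfin]
  have hint : Integrable (fun x => u x - v x) μ := by
    refine ⟨hu.sub hv, ?_⟩
    rw [hasFiniteIntegral_iff_norm]
    simpa [Real.norm_eq_abs] using Ne.lt_top hfin
  by_cases hu' : Integrable u μ
  · have hv' : Integrable v μ :=
      (hu'.sub hint).congr (ae_of_all _ fun x => by simp)
    rw [← integral_sub hu' hv']
    calc ENNReal.ofReal |∫ x, (u x - v x) ∂μ| ≤ ENNReal.ofReal (∫ x, |u x - v x| ∂μ) := by
          apply ENNReal.ofReal_le_ofReal
          simpa [Real.norm_eq_abs] using norm_integral_le_integral_norm (fun x => u x - v x) (μ := μ)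
      _ = ∫⁻ x, ENNReal.ofReal |u x - v x| ∂μ := by
          rw [ofReal_integral_eq_lintegral_ofReal hint.abs (ae_of_all _ fun x => abs_nonneg _)]
  · have hv' : ¬ Integrable v μ := fun hv' =>
      hu' ((hint.add hv').congr (ae_of_all _ fun x => by simp))
    rw [integral_undef hu', integral_undef hv']
    simp

lemma ratio_rpow_le {x y r₁ r₂ : ℝ} (hy : 0 < y) (hr₁ : 0 < r₁)
    (h1 : r₁ * y < x) (h2 : x < r₂ * y) (t : ℝ) :
    x ^ t ≤ (r₁ ^ t + r₂ ^ t) * y ^ t := by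
  have hx : 0 < x := lt_trans (by positivity) h1
  have hr2 : 0 < r₂ := by nlinarith
  have hq1 : r₁ < x / y := (lt_div_iff₀ hy).mpr h1
  have hq2 : x / y < r₂ := (div_lt_iff₀ hy).mpr h2
  have key : (x / y) ^ t ≤ r₁ ^ t + r₂ ^ t := by
    rcases le_or_gt 0 t with ht | ht
    · have h3 : (x/y) ^ t ≤ r₂ ^ t := Real.rpow_le_rpow (by positivity) hq2.le ht
      have h4 : (0:ℝ) ≤ r₁ ^ t := by positivity
      linarith
    · have h3 : (x/y) ^ t ≤ r₁ ^ t := Real.rpow_le_rpow_of_nonpos hr₁ hq1.le ht.le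
      have h4 : (0:ℝ) ≤ r₂ ^ t := by positivity
      linarith
  have hxx : x ^ t = (x/y) ^ t * y ^ t := by
    rw [← Real.mul_rpow (by positivity) hy.le, div_mul_cancel₀ _ hy.ne']
  rw [hxx]
  exact mul_le_mul_of_nonneg_right key (by positivity)

/-- Core kernel bound: `u^t·sc(u/y) ≤ σ⁻²·((B-σ)^(t-s)+(B+σ)^(t-s))·u^s·y^(t-s)`. -/
lemma ker_core {B σ : ℝ} (hσ : 0 < σ) (hσB : σ < B) {u y : ℝ} (hu : 0 < u) (hy : 0 < y)
    (t s : ℝ) :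
    u ^ t * sc B σ (u / y) ≤
      (σ ^ 2)⁻¹ * ((B - σ) ^ (t - s) + (B + σ) ^ (t - s)) * (u ^ s * y ^ (t - s)) := by
  have hB1 : (0:ℝ) < B - σ := by linarith
  have hB2 : (0:ℝ) < B + σ := by linarith
  have hR : 0 ≤ (B - σ) ^ (t - s) + (B + σ) ^ (t - s) :=
    add_nonneg (Real.rpow_nonneg hB1.le _) (Real.rpow_nonneg hB2.le _)
  by_cases hmem : u / y ∈ Set.Ioo (B - σ) (B + σ)
  · obtain ⟨h1, h2⟩ := hmem
    have h1' : (B - σ) * y < u := (lt_div_iff₀ hy).mp h1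
    have h2' : u < (B + σ) * y := (div_lt_iff₀ hy).mp h2
    have hsc := sc_le B σ (u / y)
    have hsc0 := sc_nonneg B σ (u / y)
    have hsplit : u ^ t ≤ ((B - σ) ^ (t - s) + (B + σ) ^ (t - s)) * (u ^ s * y ^ (t - s)) := by
      have h5 : u ^ (t - s) ≤ ((B - σ) ^ (t - s) + (B + σ) ^ (t - s)) * y ^ (t - s) :=
        ratio_rpow_le hy hB1 h1' h2' (t - s)
      have h6 : u ^ t = u ^ s * u ^ (t - s) := by
        rw [← Real.rpow_add hu]; ring_nf
      rw [h6]
      calc u ^ s * u ^ (t - s)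
          ≤ u ^ s * (((B - σ) ^ (t - s) + (B + σ) ^ (t - s)) * y ^ (t - s)) :=
            mul_le_mul_of_nonneg_left h5 (by positivity)
        _ = ((B - σ) ^ (t - s) + (B + σ) ^ (t - s)) * (u ^ s * y ^ (t - s)) := by ring
    calc u ^ t * sc B σ (u / y)
        ≤ (((B - σ) ^ (t - s) + (B + σ) ^ (t - s)) * (u ^ s * y ^ (t - s))) * (σ ^ 2)⁻¹ :=
          mul_le_mul hsplit hsc hsc0 (mul_nonneg hR (by positivity))
      _ = _ := by ring
  · rw [sc_eq_zero _ _ _ hmem, mul_zero]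
    have : 0 ≤ u ^ s * y ^ (t - s) := by positivity
    nlinarith [mul_nonneg hR this, inv_nonneg.mpr (sq_nonneg σ)]

lemma ker1 {K α B σ : ℝ} (hK : 0 < K) (hσ : 0 < σ) (hσB : σ < B) (p : ℝ)
    {w w' : ℝ} (hw' : 0 < w') (hww : w' < w / K) :
    w * ((w - K * w') ^ α * sc B σ ((w - K * w') / w')) ≤
      ((B + σ + K) * ((σ ^ 2)⁻¹ * ((B - σ) ^ (α - p) + (B + σ) ^ (α - p)))) *
        ((w - K * w') ^ p * w' ^ (α - p + 1)) := by
  have hB1 : (0:ℝ) < B - σ := by linarith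
  have hB2 : (0:ℝ) < B + σ := by linarith
  have hKw : w' * K < w := (lt_div_iff₀ hK).mp hww
  have hu : 0 < w - K * w' := by nlinarith
  set u := w - K * w' with hu_def
  have hR : 0 ≤ (B - σ) ^ (α - p) + (B + σ) ^ (α - p) :=
    add_nonneg (Real.rpow_nonneg hB1.le _) (Real.rpow_nonneg hB2.le _)
  have hBK : (0:ℝ) < B + σ + K := by linarith
  by_cases hmem : u / w' ∈ Set.Ioo (B - σ) (B + σ)
  · have h2' : u < (B + σ) * w' := (div_lt_iff₀ hw').mp hmem.2
    have hwle : w ≤ (B + σ + K) * w' := by nlinarith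
    have core := ker_core hσ hσB hu hw' α p
    have hww' : w' ^ (α - p + 1) = w' ^ (α - p) * w' := by
      rw [Real.rpow_add hw', Real.rpow_one]
    calc w * (u ^ α * sc B σ (u / w'))
        ≤ ((B + σ + K) * w') * (u ^ α * sc B σ (u / w')) :=
          mul_le_mul_of_nonneg_right hwle
            (mul_nonneg (Real.rpow_nonneg hu.le _) (sc_nonneg _ _ _))
      _ ≤ ((B + σ + K) * w') *
            ((σ ^ 2)⁻¹ * ((B - σ) ^ (α - p) + (B + σ) ^ (α - p)) * (u ^ p * w' ^ (α - p))) :=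
          mul_le_mul_of_nonneg_left core (by positivity)
      _ = ((B + σ + K) * ((σ ^ 2)⁻¹ * ((B - σ) ^ (α - p) + (B + σ) ^ (α - p)))) *
            (u ^ p * w' ^ (α - p + 1)) := by rw [hww']; ring
  · rw [sc_eq_zero _ _ _ hmem, mul_zero, mul_zero]
    have h1 : (0:ℝ) ≤ u ^ p * w' ^ (α - p + 1) := by positivity
    have h2 : (0:ℝ) ≤ (σ ^ 2)⁻¹ := by positivity
    nlinarith [mul_nonneg (mul_nonneg h2 hR) h1]

lemma ker2 {K' α B σ : ℝ} (hK' : 0 < K') (hσ : 0 < σ) (hσB : σ < B) (q : ℝ)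
    {w w' : ℝ} (hw : 0 < w) (hw' : 0 < w') :
    w * (w' ^ α * sc B σ (K' * w' / w)) ≤
      (K' * ((σ ^ 2)⁻¹ * ((B - σ) ^ (α - q) + (B + σ) ^ (α - q)))) *
        ((w / K') ^ (α - q + 1) * w' ^ q) := by
  set y := w / K' with hy_def
  have hy : 0 < y := by positivity
  have harg : K' * w' / w = w' / y := by
    rw [hy_def, div_div_eq_mul_div]; ring
  have hwy : w = K' * y := by rw [hy_def]; field_simp
  have core := ker_core hσ hσB hw' hy α q
  have hyy : y ^ (α - q + 1) = y ^ (α - q) * y := by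
    rw [Real.rpow_add hy, Real.rpow_one]
  calc w * (w' ^ α * sc B σ (K' * w' / w))
      = (K' * y) * (w' ^ α * sc B σ (w' / y)) := by rw [harg, ← hwy]
    _ ≤ (K' * y) *
          ((σ ^ 2)⁻¹ * ((B - σ) ^ (α - q) + (B + σ) ^ (α - q)) * (w' ^ q * y ^ (α - q))) :=
        mul_le_mul_of_nonneg_left core (by positivity)
    _ = (K' * ((σ ^ 2)⁻¹ * ((B - σ) ^ (α - q) + (B + σ) ^ (α - q)))) *
          (y ^ (α - q + 1) * w' ^ q) := by rw [hyy]; ring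

lemma ker3 {α B σ : ℝ} (hσ : 0 < σ) (hσB : σ < B) (p : ℝ)
    {w w' : ℝ} (hw : 0 < w) (hw' : 0 < w') :
    w * (w ^ α * sc B σ (w / w') + w' ^ α * sc B σ (w' / w)) ≤
      ((σ ^ 2)⁻¹ * ((B - σ) ^ (α - p + 1) + (B + σ) ^ (α - p + 1)) +
        (σ ^ 2)⁻¹ * ((B - σ) ^ (p - 1) + (B + σ) ^ (p - 1))) *
        (w ^ p * w' ^ (α - p + 1)) := by
  have core1 := ker_core hσ hσB hw hw' α (p - 1)
  have core2 := ker_core hσ hσB hw' hw α (α - p + 1)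
  have he1 : α - (p - 1) = α - p + 1 := by ring
  have he2 : α - (α - p + 1) = p - 1 := by ring
  rw [he1] at core1
  rw [he2] at core2
  have hwp : w ^ (p - 1) * w = w ^ p := by
    nth_rewrite 2 [← Real.rpow_one w]
    rw [← Real.rpow_add hw]
    ring_nf
  have hsc1 : 0 ≤ w ^ α * sc B σ (w / w') :=
    mul_nonneg (Real.rpow_nonneg hw.le _) (sc_nonneg _ _ _)
  have hsc2 : 0 ≤ w' ^ α * sc B σ (w' / w) :=
    mul_nonneg (Real.rpow_nonneg hw'.le _) (sc_nonneg _ _ _)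
  have h1 : w * (w ^ α * sc B σ (w / w')) ≤
      ((σ ^ 2)⁻¹ * ((B - σ) ^ (α - p + 1) + (B + σ) ^ (α - p + 1))) *
        (w ^ p * w' ^ (α - p + 1)) := by
    calc w * (w ^ α * sc B σ (w / w'))
        ≤ w * ((σ ^ 2)⁻¹ * ((B - σ) ^ (α - p + 1) + (B + σ) ^ (α - p + 1)) *
            (w ^ (p - 1) * w' ^ (α - p + 1))) := mul_le_mul_of_nonneg_left core1 hw.le
      _ = _ := by rw [← hwp]; ring
  have h2 : w * (w' ^ α * sc B σ (w' / w)) ≤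
      ((σ ^ 2)⁻¹ * ((B - σ) ^ (p - 1) + (B + σ) ^ (p - 1))) *
        (w ^ p * w' ^ (α - p + 1)) := by
    calc w * (w' ^ α * sc B σ (w' / w))
        ≤ w * ((σ ^ 2)⁻¹ * ((B - σ) ^ (p - 1) + (B + σ) ^ (p - 1)) *
            (w' ^ (α - p + 1) * w ^ (p - 1))) := mul_le_mul_of_nonneg_left core2 hw.le
      _ = _ := by rw [← hwp]; ring
  calc w * (w ^ α * sc B σ (w / w') + w' ^ α * sc B σ (w' / w))
      = w * (w ^ α * sc B σ (w / w')) + w * (w' ^ α * sc B σ (w' / w)) := by ring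
    _ ≤ _ := by rw [add_mul]; exact add_le_add h1 h2

open scoped ENNReal

noncomputable def inn1 (K α B σ : ℝ) (φ ψ : ℝ → ℝ≥0∞) (w : ℝ) : ℝ≥0∞ :=
  ∫⁻ w' in Ioi (0:ℝ), (Iio (w / K)).indicator
    (fun w' => ENNReal.ofReal ((w - K * w') ^ α * sc B σ ((w - K * w') / w')) *
      (φ (w - K * w') * ψ w')) w'

noncomputable def inn2 (K' α B σ : ℝ) (φ ψ : ℝ → ℝ≥0∞) (w : ℝ) : ℝ≥0∞ :=
  ∫⁻ w' in Ioi (0:ℝ), ENNReal.ofReal (w' ^ α * sc B σ (K' * w' / w)) * (φ (w / K') * ψ w')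

noncomputable def inn3 (α B σ : ℝ) (φ ψ : ℝ → ℝ≥0∞) (w : ℝ) : ℝ≥0∞ :=
  ∫⁻ w' in Ioi (0:ℝ),
    ENNReal.ofReal (w ^ α * sc B σ (w / w') + w' ^ α * sc B σ (w' / w)) * (φ w * ψ w')

lemma meas_ker1 {K α B σ : ℝ} {φ ψ : ℝ → ℝ≥0∞} (hφ : Measurable φ) (hψ : Measurable ψ) :
    Measurable (fun z : ℝ × ℝ => (Iio (z.1 / K)).indicator
      (fun w' => ENNReal.ofReal ((z.1 - K * w') ^ α * sc B σ ((z.1 - K * w') / w')) *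
        (φ (z.1 - K * w') * ψ w')) z.2) := by
  have : (fun z : ℝ × ℝ => (Iio (z.1 / K)).indicator
      (fun w' => ENNReal.ofReal ((z.1 - K * w') ^ α * sc B σ ((z.1 - K * w') / w')) *
        (φ (z.1 - K * w') * ψ w')) z.2) =
      fun z : ℝ × ℝ => if z.2 < z.1 / K then
        ENNReal.ofReal ((z.1 - K * z.2) ^ α * sc B σ ((z.1 - K * z.2) / z.2)) *
          (φ (z.1 - K * z.2) * ψ z.2) else 0 := by
    ext z; rw [Set.indicator_apply]; simp [mem_Iio]
  rw [this]
  apply Measurable.ite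
  · exact measurableSet_lt measurable_snd (measurable_fst.div_const K)
  · apply Measurable.mul
    · apply ENNReal.measurable_ofReal.comp
      apply Measurable.mul
      · fun_prop
      · exact (sc_measurable B σ).comp (by fun_prop)
    · exact ((hφ.comp (by fun_prop)).mul (hψ.comp measurable_snd))
  · exact measurable_const

lemma meas_inn1 {K α B σ : ℝ} {φ ψ : ℝ → ℝ≥0∞} (hφ : Measurable φ) (hψ : Measurable ψ) :
    Measurable (inn1 K α B σ φ ψ) :=
  Measurable.lintegral_prod_right (f := fun w w' => (Iio (w / K)).indicator
      (fun w' => ENNReal.ofReal ((w - K * w') ^ α * sc B σ ((w - K * w') / w')) *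
        (φ (w - K * w') * ψ w')) w') (meas_ker1 hφ hψ)

lemma meas_ker2 {K' α B σ : ℝ} {φ ψ : ℝ → ℝ≥0∞} (hφ : Measurable φ) (hψ : Measurable ψ) :
    Measurable (fun z : ℝ × ℝ =>
      ENNReal.ofReal (z.2 ^ α * sc B σ (K' * z.2 / z.1)) * (φ (z.1 / K') * ψ z.2)) := by
  apply Measurable.mul
  · apply ENNReal.measurable_ofReal.comp
    exact Measurable.mul (by fun_prop) ((sc_measurable B σ).comp (by fun_prop))
  · exact ((hφ.comp (measurable_fst.div_const K')).mul (hψ.comp measurable_snd))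

lemma meas_inn2 {K' α B σ : ℝ} {φ ψ : ℝ → ℝ≥0∞} (hφ : Measurable φ) (hψ : Measurable ψ) :
    Measurable (inn2 K' α B σ φ ψ) :=
  Measurable.lintegral_prod_right (f := fun w w' =>
    ENNReal.ofReal (w' ^ α * sc B σ (K' * w' / w)) * (φ (w / K') * ψ w')) (meas_ker2 hφ hψ)

lemma meas_ker3 {α B σ : ℝ} {φ ψ : ℝ → ℝ≥0∞} (hφ : Measurable φ) (hψ : Measurable ψ) :
    Measurable (fun z : ℝ × ℝ =>
      ENNReal.ofReal (z.1 ^ α * sc B σ (z.1 / z.2) + z.2 ^ α * sc B σ (z.2 / z.1)) *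
        (φ z.1 * ψ z.2)) := by
  apply Measurable.mul
  · apply ENNReal.measurable_ofReal.comp
    apply Measurable.add
    · exact Measurable.mul (by fun_prop) ((sc_measurable B σ).comp (by fun_prop))
    · exact Measurable.mul (by fun_prop) ((sc_measurable B σ).comp (by fun_prop))
  · exact ((hφ.comp measurable_fst).mul (hψ.comp measurable_snd))

lemma meas_inn3 {α B σ : ℝ} {φ ψ : ℝ → ℝ≥0∞} (hφ : Measurable φ) (hψ : Measurable ψ) :
    Measurable (inn3 α B σ φ ψ) :=
  Measurable.lintegral_prod_right (f := fun w w' =>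
    ENNReal.ofReal (w ^ α * sc B σ (w / w') + w' ^ α * sc B σ (w' / w)) * (φ w * ψ w'))
    (meas_ker3 hφ hψ)

lemma est1 {K α B σ C p q : ℝ} (hK : 0 < K) (hC : 0 ≤ C)
    {φ ψ : ℝ → ℝ≥0∞} (hφ : Measurable φ) (hψ : Measurable ψ)
    (hker : ∀ w w' : ℝ, 0 < w' → w' < w / K →
      w * ((w - K * w') ^ α * sc B σ ((w - K * w') / w')) ≤ C * ((w - K * w') ^ p * w' ^ q)) :
    ∫⁻ w in Ioi (0:ℝ), ENNReal.ofReal w * inn1 K α B σ φ ψ w ≤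
      ENNReal.ofReal C * (∫⁻ u in Ioi (0:ℝ), ENNReal.ofReal (u ^ p) * φ u) *
        (∫⁻ y in Ioi (0:ℝ), ENNReal.ofReal (y ^ q) * ψ y) := by
  set Θ : ℝ → ℝ≥0∞ := (Ioi (0:ℝ)).indicator (fun u => ENNReal.ofReal (u ^ p) * φ u) with hΘ
  have hΘm : Measurable Θ := ((ENNReal.measurable_ofReal.comp (by fun_prop)).mul hφ).indicator
    measurableSet_Ioi
  set Ψ : ℝ → ℝ≥0∞ := fun y => ENNReal.ofReal (y ^ q) * ψ y with hΨ
  have hΨm : Measurable Ψ := (ENNReal.measurable_ofReal.comp (by fun_prop)).mul hψ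
  set G : ℝ → ℝ → ℝ≥0∞ := fun w w' => (Iio (w / K)).indicator
    (fun w' => ENNReal.ofReal w *
      (ENNReal.ofReal ((w - K * w') ^ α * sc B σ ((w - K * w') / w')) *
        (φ (w - K * w') * ψ w'))) w' with hG
  have hGm : Measurable (fun z : ℝ × ℝ => G z.1 z.2) := by
    have h1 := meas_ker1 (K := K) (α := α) (B := B) (σ := σ) hφ hψ
    have : (fun z : ℝ × ℝ => G z.1 z.2) = fun z : ℝ × ℝ =>
        (ENNReal.ofReal z.1) * (Iio (z.1 / K)).indicator
          (fun w' => ENNReal.ofReal ((z.1 - K * w') ^ α * sc B σ ((z.1 - K * w') / w')) *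
            (φ (z.1 - K * w') * ψ w')) z.2 := by
      ext z
      rw [hG]
      simp only [Set.indicator_apply]
      split <;> simp
    rw [this]
    exact (ENNReal.measurable_ofReal.comp measurable_fst).mul h1
  -- Step A : rewrite LHS
  have stepA : ∫⁻ w in Ioi (0:ℝ), ENNReal.ofReal w * inn1 K α B σ φ ψ w =
      ∫⁻ w in Ioi (0:ℝ), ∫⁻ w' in Ioi (0:ℝ), G w w' := by
    refine lintegral_congr fun w => ?_
    rw [inn1, ← lintegral_const_mul' _ _ ENNReal.ofReal_ne_top]
    refine lintegral_congr fun w' => ?_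
    rw [hG]
    simp only [Set.indicator_apply]
    split <;> simp
  rw [stepA]
  -- Step B : swap
  rw [lintegral_lintegral_swap hGm.aemeasurable]
  -- Step C : bound pointwise and integrate
  have I0def : ∫⁻ u, Θ u = ∫⁻ u in Ioi (0:ℝ), ENNReal.ofReal (u ^ p) * φ u := by
    rw [hΘ, lintegral_indicator measurableSet_Ioi]
  calc ∫⁻ w' in Ioi (0:ℝ), ∫⁻ w in Ioi (0:ℝ), G w w'
      ≤ ∫⁻ w' in Ioi (0:ℝ), (ENNReal.ofReal C * Ψ w') * ∫⁻ u, Θ u := by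
        refine lintegral_mono_ae ?_
        filter_upwards [ae_restrict_mem measurableSet_Ioi] with w' hw'
        have inner_bd : ∀ w : ℝ, G w w' ≤ (ENNReal.ofReal C * Ψ w') * Θ (w - K * w') := by
          intro w
          rw [hG]
          simp only [Set.indicator_apply]
          split
          · rename_i hlt
            rw [mem_Iio] at hlt
            have hw'0 : (0:ℝ) < w' := hw'
            have hu : 0 < w - K * w' := by
              have := (lt_div_iff₀ hK).mp hlt; nlinarith
            have hΘu : Θ (w - K * w') = ENNReal.ofReal ((w - K * w') ^ p) * φ (w - K * w') := by
              rw [hΘ, Set.indicator_of_mem (mem_Ioi.mpr hu)]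
            rw [hΘu, hΨ]
            have hwpos : 0 < w := by
              have := (lt_div_iff₀ hK).mp hlt; nlinarith
            have key : ENNReal.ofReal w *
                ENNReal.ofReal ((w - K * w') ^ α * sc B σ ((w - K * w') / w')) ≤
                ENNReal.ofReal C * ENNReal.ofReal ((w - K * w') ^ p) *
                  ENNReal.ofReal (w' ^ q) := by
              rw [← ENNReal.ofReal_mul hwpos.le, ← ENNReal.ofReal_mul hC,
                ← ENNReal.ofReal_mul (by positivity)]
              exact ENNReal.ofReal_le_ofReal (by
                have := hker w w' hw'0 hlt
                calc w * ((w - K * w') ^ α * sc B σ ((w - K * w') / w'))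
                    ≤ C * ((w - K * w') ^ p * w' ^ q) := this
                  _ = C * (w - K * w') ^ p * w' ^ q := by ring)
            calc ENNReal.ofReal w *
                  (ENNReal.ofReal ((w - K * w') ^ α * sc B σ ((w - K * w') / w')) *
                    (φ (w - K * w') * ψ w'))
                = (ENNReal.ofReal w *
                    ENNReal.ofReal ((w - K * w') ^ α * sc B σ ((w - K * w') / w'))) *
                      (φ (w - K * w') * ψ w') := by ring
              _ ≤ (ENNReal.ofReal C * ENNReal.ofReal ((w - K * w') ^ p) *
                    ENNReal.ofReal (w' ^ q)) * (φ (w - K * w') * ψ w') :=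
                  mul_le_mul_left key _
              _ = (ENNReal.ofReal C * (ENNReal.ofReal (w' ^ q) * ψ w')) *
                    (ENNReal.ofReal ((w - K * w') ^ p) * φ (w - K * w')) := by ring
          · exact zero_le
        calc ∫⁻ w in Ioi (0:ℝ), G w w'
            ≤ ∫⁻ w in Ioi (0:ℝ), (ENNReal.ofReal C * Ψ w') * Θ (w - K * w') :=
              lintegral_mono fun w => inner_bd w
          _ = (ENNReal.ofReal C * Ψ w') * ∫⁻ w in Ioi (0:ℝ), Θ (w - K * w') :=
              lintegral_const_mul _ (hΘm.comp (by fun_prop))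
          _ ≤ (ENNReal.ofReal C * Ψ w') * ∫⁻ w, Θ (w - K * w') :=
              mul_le_mul_right (setLIntegral_le_lintegral _ _) _
          _ = (ENNReal.ofReal C * Ψ w') * ∫⁻ u, Θ u := by
              rw [lintegral_sub_right_eq_self (fun w => Θ w) (K * w')]
    _ = ∫⁻ w' in Ioi (0:ℝ), (ENNReal.ofReal C * ∫⁻ u, Θ u) * Ψ w' := by
        refine lintegral_congr fun w' => ?_; ring
    _ = (ENNReal.ofReal C * ∫⁻ u, Θ u) * ∫⁻ w' in Ioi (0:ℝ), Ψ w' :=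
        lintegral_const_mul _ hΨm
    _ = ENNReal.ofReal C * (∫⁻ u in Ioi (0:ℝ), ENNReal.ofReal (u ^ p) * φ u) *
          (∫⁻ y in Ioi (0:ℝ), ENNReal.ofReal (y ^ q) * ψ y) := by
        rw [I0def]

lemma est2 {K' α B σ C p q : ℝ} (hK'0 : 0 < K') (hK'1 : K' ≤ 1) (hC : 0 ≤ C)
    {φ ψ : ℝ → ℝ≥0∞} (hφ : Measurable φ) (hψ : Measurable ψ)
    (hker : ∀ w w' : ℝ, 0 < w → 0 < w' →
      w * (w' ^ α * sc B σ (K' * w' / w)) ≤ C * ((w / K') ^ p * w' ^ q)) :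
    ∫⁻ w in Ioi (0:ℝ), ENNReal.ofReal w * inn2 K' α B σ φ ψ w ≤
      ENNReal.ofReal C * (∫⁻ u in Ioi (0:ℝ), ENNReal.ofReal (u ^ p) * φ u) *
        (∫⁻ y in Ioi (0:ℝ), ENNReal.ofReal (y ^ q) * ψ y) := by
  set Θ : ℝ → ℝ≥0∞ := (Ioi (0:ℝ)).indicator (fun u => ENNReal.ofReal (u ^ p) * φ u) with hΘ
  have hΘm : Measurable Θ := ((ENNReal.measurable_ofReal.comp (by fun_prop)).mul hφ).indicator
    measurableSet_Ioi
  set Ψ : ℝ → ℝ≥0∞ := fun y => ENNReal.ofReal (y ^ q) * ψ y with hΨ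
  have hΨm : Measurable Ψ := (ENNReal.measurable_ofReal.comp (by fun_prop)).mul hψ
  have I0def : ∫⁻ u, Θ u = ∫⁻ u in Ioi (0:ℝ), ENNReal.ofReal (u ^ p) * φ u := by
    rw [hΘ, lintegral_indicator measurableSet_Ioi]
  have scale : ∫⁻ w in Ioi (0:ℝ), Θ (w / K') ≤ ∫⁻ u, Θ u := by
    calc ∫⁻ w in Ioi (0:ℝ), Θ (w / K') ≤ ∫⁻ w, Θ (w / K') :=
          setLIntegral_le_lintegral _ _
      _ = ∫⁻ w, Θ (K'⁻¹ * w) := by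
          refine lintegral_congr fun w => ?_; rw [div_eq_inv_mul]
      _ = ENNReal.ofReal |(K'⁻¹)⁻¹| * ∫⁻ u, Θ u := by
          rw [← lintegral_map hΘm (measurable_const_mul K'⁻¹),
            Real.map_volume_mul_left (inv_ne_zero hK'0.ne'), lintegral_smul_measure, smul_eq_mul]
      _ ≤ 1 * ∫⁻ u, Θ u := by
          apply mul_le_mul_left
          rw [inv_inv, abs_of_pos hK'0]
          exact ENNReal.ofReal_le_one.mpr hK'1
      _ = ∫⁻ u, Θ u := one_mul _
  calc ∫⁻ w in Ioi (0:ℝ), ENNReal.ofReal w * inn2 K' α B σ φ ψ w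
      ≤ ∫⁻ w in Ioi (0:ℝ), (ENNReal.ofReal C * (∫⁻ y in Ioi (0:ℝ), Ψ y)) * Θ (w / K') := by
        refine lintegral_mono_ae ?_
        filter_upwards [ae_restrict_mem measurableSet_Ioi] with w hw
        have hw0 : (0:ℝ) < w := hw
        have hwK : 0 < w / K' := by positivity
        rw [inn2, ← lintegral_const_mul' _ _ ENNReal.ofReal_ne_top]
        have hbd : ∫⁻ w' in Ioi (0:ℝ),
            ENNReal.ofReal w * (ENNReal.ofReal (w' ^ α * sc B σ (K' * w' / w)) *
              (φ (w / K') * ψ w')) ≤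
            ∫⁻ w' in Ioi (0:ℝ), (ENNReal.ofReal C * Θ (w / K')) * Ψ w' := by
          refine lintegral_mono_ae ?_
          filter_upwards [ae_restrict_mem measurableSet_Ioi] with w' hw'
          have hw'0 : (0:ℝ) < w' := hw'
          have hΘu : Θ (w / K') = ENNReal.ofReal ((w / K') ^ p) * φ (w / K') := by
            rw [hΘ, Set.indicator_of_mem (mem_Ioi.mpr hwK)]
          rw [hΘu, hΨ]
          have key : ENNReal.ofReal w * ENNReal.ofReal (w' ^ α * sc B σ (K' * w' / w)) ≤
              ENNReal.ofReal C * ENNReal.ofReal ((w / K') ^ p) * ENNReal.ofReal (w' ^ q) := by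
            rw [← ENNReal.ofReal_mul hw0.le, ← ENNReal.ofReal_mul hC,
              ← ENNReal.ofReal_mul (by positivity)]
            refine ENNReal.ofReal_le_ofReal ?_
            calc w * (w' ^ α * sc B σ (K' * w' / w)) ≤ C * ((w / K') ^ p * w' ^ q) :=
                  hker w w' hw0 hw'0
              _ = C * (w / K') ^ p * w' ^ q := by ring
          calc ENNReal.ofReal w * (ENNReal.ofReal (w' ^ α * sc B σ (K' * w' / w)) *
                (φ (w / K') * ψ w'))
              = (ENNReal.ofReal w * ENNReal.ofReal (w' ^ α * sc B σ (K' * w' / w))) *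
                  (φ (w / K') * ψ w') := by ring
            _ ≤ (ENNReal.ofReal C * ENNReal.ofReal ((w / K') ^ p) * ENNReal.ofReal (w' ^ q)) *
                  (φ (w / K') * ψ w') := mul_le_mul_left key _
            _ = (ENNReal.ofReal C * (ENNReal.ofReal ((w / K') ^ p) * φ (w / K'))) *
                  (ENNReal.ofReal (w' ^ q) * ψ w') := by ring
        calc ∫⁻ w' in Ioi (0:ℝ),
              ENNReal.ofReal w * (ENNReal.ofReal (w' ^ α * sc B σ (K' * w' / w)) *
                (φ (w / K') * ψ w'))
            ≤ ∫⁻ w' in Ioi (0:ℝ), (ENNReal.ofReal C * Θ (w / K')) * Ψ w' := hbd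
          _ = (ENNReal.ofReal C * Θ (w / K')) * ∫⁻ y in Ioi (0:ℝ), Ψ y :=
              lintegral_const_mul _ hΨm
          _ = (ENNReal.ofReal C * (∫⁻ y in Ioi (0:ℝ), Ψ y)) * Θ (w / K') := by ring
    _ = (ENNReal.ofReal C * (∫⁻ y in Ioi (0:ℝ), Ψ y)) * ∫⁻ w in Ioi (0:ℝ), Θ (w / K') :=
        lintegral_const_mul _ (hΘm.comp (measurable_id.div_const K'))
    _ ≤ (ENNReal.ofReal C * (∫⁻ y in Ioi (0:ℝ), Ψ y)) * ∫⁻ u, Θ u :=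
        mul_le_mul_right scale _
    _ = ENNReal.ofReal C * (∫⁻ u in Ioi (0:ℝ), ENNReal.ofReal (u ^ p) * φ u) *
          (∫⁻ y in Ioi (0:ℝ), ENNReal.ofReal (y ^ q) * ψ y) := by
        rw [I0def]; ring

lemma est3 {α B σ C p q : ℝ} (hC : 0 ≤ C)
    {φ ψ : ℝ → ℝ≥0∞} (hφ : Measurable φ) (hψ : Measurable ψ)
    (hker : ∀ w w' : ℝ, 0 < w → 0 < w' →
      w * (w ^ α * sc B σ (w / w') + w' ^ α * sc B σ (w' / w)) ≤ C * (w ^ p * w' ^ q)) :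
    ∫⁻ w in Ioi (0:ℝ), ENNReal.ofReal w * inn3 α B σ φ ψ w ≤
      ENNReal.ofReal C * (∫⁻ u in Ioi (0:ℝ), ENNReal.ofReal (u ^ p) * φ u) *
        (∫⁻ y in Ioi (0:ℝ), ENNReal.ofReal (y ^ q) * ψ y) := by
  set Ψ : ℝ → ℝ≥0∞ := fun y => ENNReal.ofReal (y ^ q) * ψ y with hΨ
  have hΨm : Measurable Ψ := (ENNReal.measurable_ofReal.comp (by fun_prop)).mul hψ
  calc ∫⁻ w in Ioi (0:ℝ), ENNReal.ofReal w * inn3 α B σ φ ψ w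
      ≤ ∫⁻ w in Ioi (0:ℝ),
          (ENNReal.ofReal C * (∫⁻ y in Ioi (0:ℝ), Ψ y)) *
            (ENNReal.ofReal (w ^ p) * φ w) := by
        refine lintegral_mono_ae ?_
        filter_upwards [ae_restrict_mem measurableSet_Ioi] with w hw
        have hw0 : (0:ℝ) < w := hw
        rw [inn3, ← lintegral_const_mul' _ _ ENNReal.ofReal_ne_top]
        have hbd : ∫⁻ w' in Ioi (0:ℝ),
            ENNReal.ofReal w *
              (ENNReal.ofReal (w ^ α * sc B σ (w / w') + w' ^ α * sc B σ (w' / w)) *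
                (φ w * ψ w')) ≤
            ∫⁻ w' in Ioi (0:ℝ),
              (ENNReal.ofReal C * (ENNReal.ofReal (w ^ p) * φ w)) * Ψ w' := by
          refine lintegral_mono_ae ?_
          filter_upwards [ae_restrict_mem measurableSet_Ioi] with w' hw'
          have hw'0 : (0:ℝ) < w' := hw'
          have key : ENNReal.ofReal w *
              ENNReal.ofReal (w ^ α * sc B σ (w / w') + w' ^ α * sc B σ (w' / w)) ≤
              ENNReal.ofReal C * ENNReal.ofReal (w ^ p) * ENNReal.ofReal (w' ^ q) := by
            rw [← ENNReal.ofReal_mul hw0.le, ← ENNReal.ofReal_mul hC,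
              ← ENNReal.ofReal_mul (by positivity)]
            refine ENNReal.ofReal_le_ofReal ?_
            calc w * (w ^ α * sc B σ (w / w') + w' ^ α * sc B σ (w' / w))
                ≤ C * (w ^ p * w' ^ q) := hker w w' hw0 hw'0
              _ = C * w ^ p * w' ^ q := by ring
          calc ENNReal.ofReal w *
                (ENNReal.ofReal (w ^ α * sc B σ (w / w') + w' ^ α * sc B σ (w' / w)) *
                  (φ w * ψ w'))
              = (ENNReal.ofReal w *
                  ENNReal.ofReal (w ^ α * sc B σ (w / w') + w' ^ α * sc B σ (w' / w))) *
                    (φ w * ψ w') := by ring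
            _ ≤ (ENNReal.ofReal C * ENNReal.ofReal (w ^ p) * ENNReal.ofReal (w' ^ q)) *
                  (φ w * ψ w') := mul_le_mul_left key _
            _ = (ENNReal.ofReal C * (ENNReal.ofReal (w ^ p) * φ w)) *
                  (ENNReal.ofReal (w' ^ q) * ψ w') := by ring
        calc ∫⁻ w' in Ioi (0:ℝ),
              ENNReal.ofReal w *
                (ENNReal.ofReal (w ^ α * sc B σ (w / w') + w' ^ α * sc B σ (w' / w)) *
                  (φ w * ψ w'))
            ≤ ∫⁻ w' in Ioi (0:ℝ),
                (ENNReal.ofReal C * (ENNReal.ofReal (w ^ p) * φ w)) * Ψ w' := hbd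
          _ = (ENNReal.ofReal C * (ENNReal.ofReal (w ^ p) * φ w)) *
                ∫⁻ y in Ioi (0:ℝ), Ψ y := lintegral_const_mul _ hΨm
          _ = (ENNReal.ofReal C * (∫⁻ y in Ioi (0:ℝ), Ψ y)) *
                (ENNReal.ofReal (w ^ p) * φ w) := by ring
    _ = (ENNReal.ofReal C * (∫⁻ y in Ioi (0:ℝ), Ψ y)) *
          ∫⁻ w in Ioi (0:ℝ), ENNReal.ofReal (w ^ p) * φ w :=
        lintegral_const_mul _ ((ENNReal.measurable_ofReal.comp (by fun_prop)).mul hφ)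
    _ = ENNReal.ofReal C * (∫⁻ u in Ioi (0:ℝ), ENNReal.ofReal (u ^ p) * φ u) *
          (∫⁻ y in Ioi (0:ℝ), ENNReal.ofReal (y ^ q) * ψ y) := by ring

lemma integral_le_toReal_lintegral {X : Type*} [MeasurableSpace X] (μ : Measure X) (h : X → ℝ)
    (h0 : ∀ᵐ x ∂μ, 0 ≤ h x) :
    ∫ x, h x ∂μ ≤ (∫⁻ x, ENNReal.ofReal (h x) ∂μ).toReal := by
  by_cases hm : AEStronglyMeasurable h μ
  · exact le_of_eq (integral_eq_lintegral_of_nonneg_ae h0 hm)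
  · rw [integral_non_aestronglyMeasurable hm]
    exact ENNReal.toReal_nonneg

lemma abs_sub_le_abs_add_abs (a b : ℝ) : |a - b| ≤ |a| + |b| := by
  calc |a - b| = |a + (-b)| := by ring_nf
    _ ≤ |a| + |(-b)| := abs_add_le _ _
    _ = |a| + |b| := by rw [abs_neg]


lemma abs_bilinear_diff (κ a1 a2 b1 b2 : ℝ) (hκ : 0 ≤ κ) :
    |κ * a1 * b1 - κ * a2 * b2| ≤ κ * (|a1 - a2| * |b1|) + κ * (|a2| * |b1 - b2|) := by
  have hid : κ * a1 * b1 - κ * a2 * b2 = κ * ((a1 - a2) * b1) + κ * (a2 * (b1 - b2)) := by ring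
  rw [hid]
  refine (abs_add_le _ _).trans (le_of_eq ?_)
  rw [abs_mul κ, abs_mul κ, abs_of_nonneg hκ, abs_mul, abs_mul]

lemma abs_bilinear_diff' (κ a1 a2 b1 b2 : ℝ) (hκ : 0 ≤ κ) :
    |κ * (a1 * b1) - κ * (a2 * b2)| ≤ κ * (|a1 - a2| * |b1|) + κ * (|a2| * |b1 - b2|) := by
  have h1 : κ * (a1 * b1) = κ * a1 * b1 := by ring
  have h2 : κ * (a2 * b2) = κ * a2 * b2 := by ring
  rw [h1, h2]
  exact abs_bilinear_diff κ a1 a2 b1 b2 hκ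

set_option maxHeartbeats 3000000 in
/-- Lipschitz estimate for the predation operator in the biomass-weighted `L¹` norm:
there is a constant `C = C(B,σ,K,K',α) > 0` such that for all `M > 0` and all `f¹, f²`
with `α`-th absolute moment bounded by `M` and `w fⁱ ∈ L¹`,
`‖Q(f¹,f¹) − Q(f²,f²)‖_{L¹(w dw)} ≤ C·M·‖f¹ − f²‖_{L¹(w dw)}`. -/
theorem Qop_lipschitz
    (K K' α B σ : ℝ)
    (hK : K ∈ Ioo (0 : ℝ) 1) (hK' : K' ∈ Ioo (0 : ℝ) 1)
    (hα : 0 < α) (hσ : 0 < σ) (hσB : σ < B) :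
    ∃ C > (0 : ℝ), ∀ M > (0 : ℝ), ∀ f₁ f₂ : ℝ → ℝ,
      Measurable f₁ → Measurable f₂ →
      IntegrableOn (fun w => w * f₁ w) (Ioi 0) →
      IntegrableOn (fun w => w * f₂ w) (Ioi 0) →
      IntegrableOn (fun w => w ^ α * |f₁ w|) (Ioi 0) →
      IntegrableOn (fun w => w ^ α * |f₂ w|) (Ioi 0) →
      (∫ w in Ioi (0 : ℝ), w ^ α * |f₁ w|) ≤ M →
      (∫ w in Ioi (0 : ℝ), w ^ α * |f₂ w|) ≤ M →
      (∫ w in Ioi (0 : ℝ), w * |Qop K K' α B σ f₁ w - Qop K K' α B σ f₂ w|) ≤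
        C * M * ∫ w in Ioi (0 : ℝ), w * |f₁ w - f₂ w| := by
  obtain ⟨hK0, hK1⟩ := hK
  obtain ⟨hK'0, hK'1⟩ := hK'
  have hB1 : (0:ℝ) < B - σ := by linarith
  have hB2 : (0:ℝ) < B + σ := by linarith
  set Rf : ℝ → ℝ := fun t => (B - σ) ^ t + (B + σ) ^ t with hRf
  have hRfpos : ∀ t, 0 < Rf t := fun t =>
    add_pos (Real.rpow_pos_of_pos hB1 t) (Real.rpow_pos_of_pos hB2 t)
  set Cs : ℝ := (σ ^ 2)⁻¹ with hCs
  have hCspos : 0 < Cs := by rw [hCs]; positivity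
  set c0 : ℝ := (1 - K) / K' ^ 2 with hc0def
  have hc0 : 0 < c0 := by rw [hc0def]; exact div_pos (by linarith) (by positivity)
  set C1g : ℝ := (B + σ + K) * (Cs * Rf (α - 1)) with hC1gdef
  set C1f : ℝ := (B + σ + K) * (Cs * Rf (α - α)) with hC1fdef
  set C2g : ℝ := K' * (Cs * Rf (α - α)) with hC2gdef
  set C2f : ℝ := K' * (Cs * Rf (α - 1)) with hC2fdef
  set C3g : ℝ := Cs * Rf α + Cs * Rf (1 - 1) with hC3gdef
  set C3f : ℝ := Cs * Rf 1 + Cs * Rf (α - 1) with hC3fdef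
  have hBKpos : (0:ℝ) < B + σ + K := by linarith
  have hC1g : 0 < C1g := mul_pos hBKpos (mul_pos hCspos (hRfpos _))
  have hC1f : 0 < C1f := mul_pos hBKpos (mul_pos hCspos (hRfpos _))
  have hC2g : 0 < C2g := mul_pos hK'0 (mul_pos hCspos (hRfpos _))
  have hC2f : 0 < C2f := mul_pos hK'0 (mul_pos hCspos (hRfpos _))
  have hC3g : 0 < C3g := add_pos (mul_pos hCspos (hRfpos _)) (mul_pos hCspos (hRfpos _))
  have hC3f : 0 < C3f := add_pos (mul_pos hCspos (hRfpos _)) (mul_pos hCspos (hRfpos _))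
  set Ctot : ℝ := C1g + C1f + (c0 * C2g + c0 * C2f) + (C3g + C3f) with hCtotdef
  have hCtot : 0 < Ctot := by
    have := mul_pos hc0 hC2g
    have := mul_pos hc0 hC2f
    rw [hCtotdef]; positivity
  refine ⟨Ctot, hCtot, ?_⟩
  intro M hM f₁ f₂ hm1 hm2 hw1 hw2 ha1 ha2 hMb1 hMb2
  set g : ℝ → ℝ := fun u => f₁ u - f₂ u with hgdef
  set φg : ℝ → ℝ≥0∞ := fun u => ENNReal.ofReal |f₁ u - f₂ u| with hφg
  set φ1 : ℝ → ℝ≥0∞ := fun u => ENNReal.ofReal |f₁ u| with hφ1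
  set φ2 : ℝ → ℝ≥0∞ := fun u => ENNReal.ofReal |f₂ u| with hφ2
  have mφg : Measurable φg := ENNReal.measurable_ofReal.comp (hm1.sub hm2).abs
  have mφ1 : Measurable φ1 := ENNReal.measurable_ofReal.comp hm1.abs
  have mφ2 : Measurable φ2 := ENNReal.measurable_ofReal.comp hm2.abs
  set Ng : ℝ≥0∞ := ∫⁻ u in Ioi (0:ℝ), ENNReal.ofReal u * φg u with hNgdef
  set Mα1 : ℝ≥0∞ := ∫⁻ u in Ioi (0:ℝ), ENNReal.ofReal (u ^ α) * φ1 u with hMα1def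
  set Mα2 : ℝ≥0∞ := ∫⁻ u in Ioi (0:ℝ), ENNReal.ofReal (u ^ α) * φ2 u with hMα2def
  -- identification of Ng with the weighted L¹ norm
  have hIg : IntegrableOn (fun w => w * |f₁ w - f₂ w|) (Ioi 0) := by
    have h0 : IntegrableOn (fun w => w * f₁ w - w * f₂ w) (Ioi 0) :=
      (hw1.sub hw2).congr (ae_of_all _ fun w => by simp)
    refine h0.abs.congr ?_
    filter_upwards [ae_restrict_mem measurableSet_Ioi] with w hw
    have hw0 : (0:ℝ) < w := hw
    rw [← mul_sub, abs_mul, abs_of_pos hw0]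
  have hNg : Ng = ENNReal.ofReal (∫ w in Ioi (0:ℝ), w * |f₁ w - f₂ w|) := by
    rw [hNgdef, ofReal_integral_eq_lintegral_ofReal hIg
      (by filter_upwards [ae_restrict_mem measurableSet_Ioi] with w hw;
          exact mul_nonneg (le_of_lt hw) (abs_nonneg _))]
    refine lintegral_congr_ae ?_
    filter_upwards [ae_restrict_mem measurableSet_Ioi] with w hw
    rw [hφg, ENNReal.ofReal_mul (le_of_lt hw)]
  have hMle : ∀ (f : ℝ → ℝ), IntegrableOn (fun w => w ^ α * |f w|) (Ioi 0) →
      (∫ w in Ioi (0:ℝ), w ^ α * |f w|) ≤ M →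
      (∫⁻ u in Ioi (0:ℝ), ENNReal.ofReal (u ^ α) * ENNReal.ofReal |f u|) ≤
        ENNReal.ofReal M := by
    intro f hint hbd
    have heq : (∫⁻ u in Ioi (0:ℝ), ENNReal.ofReal (u ^ α) * ENNReal.ofReal |f u|) =
        ENNReal.ofReal (∫ w in Ioi (0:ℝ), w ^ α * |f w|) := by
      rw [ofReal_integral_eq_lintegral_ofReal hint
        (by filter_upwards [ae_restrict_mem measurableSet_Ioi] with w hw;
            exact mul_nonneg (Real.rpow_nonneg (le_of_lt hw) α) (abs_nonneg _))]
      refine lintegral_congr_ae ?_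
      filter_upwards [ae_restrict_mem measurableSet_Ioi] with w hw
      rw [ENNReal.ofReal_mul (Real.rpow_nonneg (le_of_lt hw) α)]
    rw [heq]
    exact ENNReal.ofReal_le_ofReal hbd
  have hM1le : Mα1 ≤ ENNReal.ofReal M := hMle f₁ ha1 hMb1
  have hM2le : Mα2 ≤ ENNReal.ofReal M := hMle f₂ ha2 hMb2
  -- instantiated kernel bounds
  have e1 : α - 1 + 1 = α := by ring
  have e2 : α - α + 1 = (1:ℝ) := by ring
  have hker1g : ∀ w w' : ℝ, 0 < w' → w' < w / K →
      w * ((w - K * w') ^ α * sc B σ ((w - K * w') / w')) ≤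
        C1g * ((w - K * w') ^ (1:ℝ) * w' ^ α) := by
    intro w w' h h'
    have hh := ker1 (α := α) (B := B) (σ := σ) hK0 hσ hσB 1 h h'
    rw [e1] at hh
    simpa only [hC1gdef, hCs, hRf] using hh
  have hker1f : ∀ w w' : ℝ, 0 < w' → w' < w / K →
      w * ((w - K * w') ^ α * sc B σ ((w - K * w') / w')) ≤
        C1f * ((w - K * w') ^ α * w' ^ (1:ℝ)) := by
    intro w w' h h'
    have hh := ker1 (α := α) (B := B) (σ := σ) hK0 hσ hσB α h h'
    rw [e2] at hh
    simpa only [hC1fdef, hCs, hRf] using hh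
  have hker2g : ∀ w w' : ℝ, 0 < w → 0 < w' →
      w * (w' ^ α * sc B σ (K' * w' / w)) ≤ C2g * ((w / K') ^ (1:ℝ) * w' ^ α) := by
    intro w w' h h'
    have hh := ker2 (α := α) (B := B) (σ := σ) hK'0 hσ hσB α h h'
    rw [e2] at hh
    simpa only [hC2gdef, hCs, hRf] using hh
  have hker2f : ∀ w w' : ℝ, 0 < w → 0 < w' →
      w * (w' ^ α * sc B σ (K' * w' / w)) ≤ C2f * ((w / K') ^ α * w' ^ (1:ℝ)) := by
    intro w w' h h'
    have hh := ker2 (α := α) (B := B) (σ := σ) hK'0 hσ hσB 1 h h'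
    rw [e1] at hh
    simpa only [hC2fdef, hCs, hRf] using hh
  have hker3g : ∀ w w' : ℝ, 0 < w → 0 < w' →
      w * (w ^ α * sc B σ (w / w') + w' ^ α * sc B σ (w' / w)) ≤
        C3g * (w ^ (1:ℝ) * w' ^ α) := by
    intro w w' h h'
    have hh := ker3 (α := α) (B := B) (σ := σ) hσ hσB 1 h h'
    rw [e1] at hh
    simpa only [hC3gdef, hCs, hRf] using hh
  have hker3f : ∀ w w' : ℝ, 0 < w → 0 < w' →
      w * (w ^ α * sc B σ (w / w') + w' ^ α * sc B σ (w' / w)) ≤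
        C3f * (w ^ α * w' ^ (1:ℝ)) := by
    intro w w' h h'
    have hh := ker3 (α := α) (B := B) (σ := σ) hσ hσB α h h'
    rw [e2] at hh
    simpa only [hC3fdef, hCs, hRf] using hh
  -- rpow-one conversions
  have honeg : (∫⁻ u in Ioi (0:ℝ), ENNReal.ofReal (u ^ (1:ℝ)) * φg u) = Ng := by
    rw [hNgdef]; exact lintegral_congr fun u => by rw [Real.rpow_one]
  -- the six estimates
  have E1g : (∫⁻ w in Ioi (0:ℝ), ENNReal.ofReal w * inn1 K α B σ φg φ1 w) ≤
      (ENNReal.ofReal C1g * ENNReal.ofReal M) * Ng := by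
    have h := est1 (p := (1:ℝ)) (q := α) (B := B) (σ := σ) hK0 hC1g.le mφg mφ1 hker1g
    rw [honeg, ← hMα1def] at h
    refine h.trans ?_
    calc ENNReal.ofReal C1g * Ng * Mα1 ≤ ENNReal.ofReal C1g * Ng * ENNReal.ofReal M :=
          mul_le_mul_right hM1le _
      _ = (ENNReal.ofReal C1g * ENNReal.ofReal M) * Ng := by ring
  have E1f : (∫⁻ w in Ioi (0:ℝ), ENNReal.ofReal w * inn1 K α B σ φ2 φg w) ≤
      (ENNReal.ofReal C1f * ENNReal.ofReal M) * Ng := by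
    have h := est1 (p := α) (q := (1:ℝ)) (B := B) (σ := σ) hK0 hC1f.le mφ2 mφg hker1f
    rw [honeg, ← hMα2def] at h
    refine h.trans ?_
    calc ENNReal.ofReal C1f * Mα2 * Ng ≤ ENNReal.ofReal C1f * ENNReal.ofReal M * Ng := by
          exact mul_le_mul_left (mul_le_mul_right hM2le _) _
      _ = (ENNReal.ofReal C1f * ENNReal.ofReal M) * Ng := by ring
  have E2g : (∫⁻ w in Ioi (0:ℝ), ENNReal.ofReal w * inn2 K' α B σ φg φ1 w) ≤
      (ENNReal.ofReal C2g * ENNReal.ofReal M) * Ng := by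
    have h := est2 (p := (1:ℝ)) (q := α) (B := B) (σ := σ) hK'0 hK'1.le hC2g.le mφg mφ1 hker2g
    rw [honeg, ← hMα1def] at h
    refine h.trans ?_
    calc ENNReal.ofReal C2g * Ng * Mα1 ≤ ENNReal.ofReal C2g * Ng * ENNReal.ofReal M :=
          mul_le_mul_right hM1le _
      _ = (ENNReal.ofReal C2g * ENNReal.ofReal M) * Ng := by ring
  have E2f : (∫⁻ w in Ioi (0:ℝ), ENNReal.ofReal w * inn2 K' α B σ φ2 φg w) ≤
      (ENNReal.ofReal C2f * ENNReal.ofReal M) * Ng := by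
    have h := est2 (p := α) (q := (1:ℝ)) (B := B) (σ := σ) hK'0 hK'1.le hC2f.le mφ2 mφg hker2f
    rw [honeg, ← hMα2def] at h
    refine h.trans ?_
    calc ENNReal.ofReal C2f * Mα2 * Ng ≤ ENNReal.ofReal C2f * ENNReal.ofReal M * Ng :=
          mul_le_mul_left (mul_le_mul_right hM2le _) _
      _ = (ENNReal.ofReal C2f * ENNReal.ofReal M) * Ng := by ring
  have E3g : (∫⁻ w in Ioi (0:ℝ), ENNReal.ofReal w * inn3 α B σ φg φ1 w) ≤
      (ENNReal.ofReal C3g * ENNReal.ofReal M) * Ng := by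
    have h := est3 (p := (1:ℝ)) (q := α) (B := B) (σ := σ) hC3g.le mφg mφ1 hker3g
    rw [honeg, ← hMα1def] at h
    refine h.trans ?_
    calc ENNReal.ofReal C3g * Ng * Mα1 ≤ ENNReal.ofReal C3g * Ng * ENNReal.ofReal M :=
          mul_le_mul_right hM1le _
      _ = (ENNReal.ofReal C3g * ENNReal.ofReal M) * Ng := by ring
  have E3f : (∫⁻ w in Ioi (0:ℝ), ENNReal.ofReal w * inn3 α B σ φ2 φg w) ≤
      (ENNReal.ofReal C3f * ENNReal.ofReal M) * Ng := by
    have h := est3 (p := α) (q := (1:ℝ)) (B := B) (σ := σ) hC3f.le mφ2 mφg hker3f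
    rw [honeg, ← hMα2def] at h
    refine h.trans ?_
    calc ENNReal.ofReal C3f * Mα2 * Ng ≤ ENNReal.ofReal C3f * ENNReal.ofReal M * Ng :=
          mul_le_mul_left (mul_le_mul_right hM2le _) _
      _ = (ENNReal.ofReal C3f * ENNReal.ofReal M) * Ng := by ring
  -- pointwise bound
  have hptwise : ∀ᵐ w ∂(volume.restrict (Ioi (0:ℝ))),
      ENNReal.ofReal (w * |Qop K K' α B σ f₁ w - Qop K K' α B σ f₂ w|) ≤
        (ENNReal.ofReal w * inn1 K α B σ φg φ1 w + ENNReal.ofReal w * inn1 K α B σ φ2 φg w) +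
        ((ENNReal.ofReal c0 * (ENNReal.ofReal w * inn2 K' α B σ φg φ1 w) +
          ENNReal.ofReal c0 * (ENNReal.ofReal w * inn2 K' α B σ φ2 φg w)) +
         (ENNReal.ofReal w * inn3 α B σ φg φ1 w + ENNReal.ofReal w * inn3 α B σ φ2 φg w)) := by
    filter_upwards [ae_restrict_mem measurableSet_Ioi] with w hw
    have hw0 : (0:ℝ) < w := hw
    set A1 : ℝ := ∫ w' in Ioo (0:ℝ) (w / K),
      (w - K * w') ^ α * sc B σ ((w - K * w') / w') * f₁ (w - K * w') * f₁ w' with hA1def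
    set A2 : ℝ := ∫ w' in Ioo (0:ℝ) (w / K),
      (w - K * w') ^ α * sc B σ ((w - K * w') / w') * f₂ (w - K * w') * f₂ w' with hA2def
    set B1v : ℝ := ∫ w' in Ioi (0:ℝ), w' ^ α * sc B σ (K' * w' / w) * f₁ (w / K') * f₁ w'
      with hB1def
    set B2v : ℝ := ∫ w' in Ioi (0:ℝ), w' ^ α * sc B σ (K' * w' / w) * f₂ (w / K') * f₂ w'
      with hB2def
    set C1v : ℝ := ∫ w' in Ioi (0:ℝ),
      (w ^ α * sc B σ (w / w') + w' ^ α * sc B σ (w' / w)) * (f₁ w * f₁ w') with hC1def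
    set C2v : ℝ := ∫ w' in Ioi (0:ℝ),
      (w ^ α * sc B σ (w / w') + w' ^ α * sc B σ (w' / w)) * (f₂ w * f₂ w') with hC2def
    have hQd : Qop K K' α B σ f₁ w - Qop K K' α B σ f₂ w =
        (A1 - A2) + (c0 * (B1v - B2v) - (C1v - C2v)) := by
      simp only [Qop]
      rw [hc0def, hA1def, hA2def, hB1def, hB2def, hC1def, hC2def]
      ring
    -- bound for the first pair of integrals
    have hA : ENNReal.ofReal |A1 - A2| ≤
        inn1 K α B σ φg φ1 w + inn1 K α B σ φ2 φg w := by
      rw [hA1def, hA2def]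
      have m1 : AEStronglyMeasurable
          (fun w' => (w - K * w') ^ α * sc B σ ((w - K * w') / w') * f₁ (w - K * w') * f₁ w')
          (volume.restrict (Ioo (0:ℝ) (w / K))) := (by fun_prop : Measurable _).aestronglyMeasurable
      have m2 : AEStronglyMeasurable
          (fun w' => (w - K * w') ^ α * sc B σ ((w - K * w') / w') * f₂ (w - K * w') * f₂ w')
          (volume.restrict (Ioo (0:ℝ) (w / K))) := (by fun_prop : Measurable _).aestronglyMeasurable
      refine (ofReal_abs_integral_sub_le _ _ _ m1 m2).trans ?_
      have hsum : (∫⁻ w' in Ioo (0:ℝ) (w / K), ENNReal.ofReal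
            |(w - K * w') ^ α * sc B σ ((w - K * w') / w') * f₁ (w - K * w') * f₁ w' -
             (w - K * w') ^ α * sc B σ ((w - K * w') / w') * f₂ (w - K * w') * f₂ w'|) ≤
          ∫⁻ w' in Ioo (0:ℝ) (w / K),
            (ENNReal.ofReal ((w - K * w') ^ α * sc B σ ((w - K * w') / w')) *
              (φg (w - K * w') * φ1 w') +
             ENNReal.ofReal ((w - K * w') ^ α * sc B σ ((w - K * w') / w')) *
              (φ2 (w - K * w') * φg w')) := by
        refine lintegral_mono_ae ?_
        filter_upwards [ae_restrict_mem measurableSet_Ioo] with w' hw'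
        obtain ⟨h0', hKlt⟩ := hw'
        have hu : 0 < w - K * w' := by
          have := (lt_div_iff₀ hK0).mp hKlt; nlinarith
        have hκ0 : 0 ≤ (w - K * w') ^ α * sc B σ ((w - K * w') / w') :=
          mul_nonneg (Real.rpow_nonneg hu.le _) (sc_nonneg _ _ _)
        have hreal : |(w - K * w') ^ α * sc B σ ((w - K * w') / w') * f₁ (w - K * w') * f₁ w' -
            (w - K * w') ^ α * sc B σ ((w - K * w') / w') * f₂ (w - K * w') * f₂ w'| ≤
            ((w - K * w') ^ α * sc B σ ((w - K * w') / w')) *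
              (|f₁ (w - K * w') - f₂ (w - K * w')| * |f₁ w'|) +
            ((w - K * w') ^ α * sc B σ ((w - K * w') / w')) *
              (|f₂ (w - K * w')| * |f₁ w' - f₂ w'|) :=
          abs_bilinear_diff _ _ _ _ _ hκ0
        refine (ENNReal.ofReal_le_ofReal hreal).trans ?_
        refine (ENNReal.ofReal_add_le).trans ?_
        rw [ENNReal.ofReal_mul hκ0, ENNReal.ofReal_mul hκ0,
          ENNReal.ofReal_mul (abs_nonneg _), ENNReal.ofReal_mul (abs_nonneg _)]
      refine hsum.trans ?_
      rw [lintegral_add_left (by fun_prop : Measurable fun w' =>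
        ENNReal.ofReal ((w - K * w') ^ α * sc B σ ((w - K * w') / w')) *
          (φg (w - K * w') * φ1 w'))]
      have conv : ∀ (φ ψ : ℝ → ℝ≥0∞), (∫⁻ w' in Ioo (0:ℝ) (w / K),
          ENNReal.ofReal ((w - K * w') ^ α * sc B σ ((w - K * w') / w')) *
            (φ (w - K * w') * ψ w')) = inn1 K α B σ φ ψ w := by
        intro φ ψ
        rw [inn1, lintegral_indicator measurableSet_Iio,
          Measure.restrict_restrict measurableSet_Iio, Iio_inter_Ioi]
      rw [conv, conv]
    -- bound for the second pair
    have hB : ENNReal.ofReal |B1v - B2v| ≤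
        inn2 K' α B σ φg φ1 w + inn2 K' α B σ φ2 φg w := by
      rw [hB1def, hB2def]
      have m1 : AEStronglyMeasurable
          (fun w' => w' ^ α * sc B σ (K' * w' / w) * f₁ (w / K') * f₁ w')
          (volume.restrict (Ioi (0:ℝ))) := (by fun_prop : Measurable _).aestronglyMeasurable
      have m2 : AEStronglyMeasurable
          (fun w' => w' ^ α * sc B σ (K' * w' / w) * f₂ (w / K') * f₂ w')
          (volume.restrict (Ioi (0:ℝ))) := (by fun_prop : Measurable _).aestronglyMeasurable
      refine (ofReal_abs_integral_sub_le _ _ _ m1 m2).trans ?_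
      have hsum : (∫⁻ w' in Ioi (0:ℝ), ENNReal.ofReal
            |w' ^ α * sc B σ (K' * w' / w) * f₁ (w / K') * f₁ w' -
             w' ^ α * sc B σ (K' * w' / w) * f₂ (w / K') * f₂ w'|) ≤
          ∫⁻ w' in Ioi (0:ℝ),
            (ENNReal.ofReal (w' ^ α * sc B σ (K' * w' / w)) * (φg (w / K') * φ1 w') +
             ENNReal.ofReal (w' ^ α * sc B σ (K' * w' / w)) * (φ2 (w / K') * φg w')) := by
        refine lintegral_mono_ae ?_
        filter_upwards [ae_restrict_mem measurableSet_Ioi] with w' hw'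
        have hw'0 : (0:ℝ) < w' := hw'
        have hκ0 : 0 ≤ w' ^ α * sc B σ (K' * w' / w) :=
          mul_nonneg (Real.rpow_nonneg hw'0.le _) (sc_nonneg _ _ _)
        have hreal : |w' ^ α * sc B σ (K' * w' / w) * f₁ (w / K') * f₁ w' -
            w' ^ α * sc B σ (K' * w' / w) * f₂ (w / K') * f₂ w'| ≤
            (w' ^ α * sc B σ (K' * w' / w)) * (|f₁ (w / K') - f₂ (w / K')| * |f₁ w'|) +
            (w' ^ α * sc B σ (K' * w' / w)) * (|f₂ (w / K')| * |f₁ w' - f₂ w'|) :=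
          abs_bilinear_diff _ _ _ _ _ hκ0
        refine (ENNReal.ofReal_le_ofReal hreal).trans ?_
        refine (ENNReal.ofReal_add_le).trans ?_
        rw [ENNReal.ofReal_mul hκ0, ENNReal.ofReal_mul hκ0,
          ENNReal.ofReal_mul (abs_nonneg _), ENNReal.ofReal_mul (abs_nonneg _)]
      refine hsum.trans ?_
      rw [lintegral_add_left (by fun_prop : Measurable fun w' =>
        ENNReal.ofReal (w' ^ α * sc B σ (K' * w' / w)) * (φg (w / K') * φ1 w'))]
      simp only [inn2]
      exact le_rfl
    -- bound for the third pair
    have hC : ENNReal.ofReal |C1v - C2v| ≤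
        inn3 α B σ φg φ1 w + inn3 α B σ φ2 φg w := by
      rw [hC1def, hC2def]
      have m1 : AEStronglyMeasurable
          (fun w' => (w ^ α * sc B σ (w / w') + w' ^ α * sc B σ (w' / w)) * (f₁ w * f₁ w'))
          (volume.restrict (Ioi (0:ℝ))) := (by fun_prop : Measurable _).aestronglyMeasurable
      have m2 : AEStronglyMeasurable
          (fun w' => (w ^ α * sc B σ (w / w') + w' ^ α * sc B σ (w' / w)) * (f₂ w * f₂ w'))
          (volume.restrict (Ioi (0:ℝ))) := (by fun_prop : Measurable _).aestronglyMeasurable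
      refine (ofReal_abs_integral_sub_le _ _ _ m1 m2).trans ?_
      have hsum : (∫⁻ w' in Ioi (0:ℝ), ENNReal.ofReal
            |(w ^ α * sc B σ (w / w') + w' ^ α * sc B σ (w' / w)) * (f₁ w * f₁ w') -
             (w ^ α * sc B σ (w / w') + w' ^ α * sc B σ (w' / w)) * (f₂ w * f₂ w')|) ≤
          ∫⁻ w' in Ioi (0:ℝ),
            (ENNReal.ofReal (w ^ α * sc B σ (w / w') + w' ^ α * sc B σ (w' / w)) *
              (φg w * φ1 w') +
             ENNReal.ofReal (w ^ α * sc B σ (w / w') + w' ^ α * sc B σ (w' / w)) *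
              (φ2 w * φg w')) := by
        refine lintegral_mono_ae ?_
        filter_upwards [ae_restrict_mem measurableSet_Ioi] with w' hw'
        have hw'0 : (0:ℝ) < w' := hw'
        have hκ0 : 0 ≤ w ^ α * sc B σ (w / w') + w' ^ α * sc B σ (w' / w) :=
          add_nonneg (mul_nonneg (Real.rpow_nonneg hw0.le _) (sc_nonneg _ _ _))
            (mul_nonneg (Real.rpow_nonneg hw'0.le _) (sc_nonneg _ _ _))
        have hreal : |(w ^ α * sc B σ (w / w') + w' ^ α * sc B σ (w' / w)) * (f₁ w * f₁ w') -
            (w ^ α * sc B σ (w / w') + w' ^ α * sc B σ (w' / w)) * (f₂ w * f₂ w')| ≤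
            (w ^ α * sc B σ (w / w') + w' ^ α * sc B σ (w' / w)) * (|f₁ w - f₂ w| * |f₁ w'|) +
            (w ^ α * sc B σ (w / w') + w' ^ α * sc B σ (w' / w)) *
              (|f₂ w| * |f₁ w' - f₂ w'|) :=
          abs_bilinear_diff' _ _ _ _ _ hκ0
        refine (ENNReal.ofReal_le_ofReal hreal).trans ?_
        refine (ENNReal.ofReal_add_le).trans ?_
        rw [ENNReal.ofReal_mul hκ0, ENNReal.ofReal_mul hκ0,
          ENNReal.ofReal_mul (abs_nonneg _), ENNReal.ofReal_mul (abs_nonneg _)]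
      refine hsum.trans ?_
      rw [lintegral_add_left (by fun_prop : Measurable fun w' =>
        ENNReal.ofReal (w ^ α * sc B σ (w / w') + w' ^ α * sc B σ (w' / w)) *
          (φg w * φ1 w'))]
      simp only [inn3]
      exact le_rfl
    -- combine
    have habs : |Qop K K' α B σ f₁ w - Qop K K' α B σ f₂ w| ≤
        |A1 - A2| + (c0 * |B1v - B2v| + |C1v - C2v|) := by
      rw [hQd]
      refine (abs_add_le _ _).trans ?_
      have h2 := abs_sub_le_abs_add_abs (c0 * (B1v - B2v)) (C1v - C2v)
      rw [abs_mul, abs_of_nonneg hc0.le] at h2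
      linarith
    have hofReal : ENNReal.ofReal |Qop K K' α B σ f₁ w - Qop K K' α B σ f₂ w| ≤
        ENNReal.ofReal |A1 - A2| +
          (ENNReal.ofReal c0 * ENNReal.ofReal |B1v - B2v| + ENNReal.ofReal |C1v - C2v|) := by
      refine (ENNReal.ofReal_le_ofReal habs).trans ?_
      refine (ENNReal.ofReal_add_le).trans ?_
      refine add_le_add_right ?_ _
      refine (ENNReal.ofReal_add_le).trans ?_
      rw [ENNReal.ofReal_mul hc0.le]
    calc ENNReal.ofReal (w * |Qop K K' α B σ f₁ w - Qop K K' α B σ f₂ w|)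
        = ENNReal.ofReal w * ENNReal.ofReal |Qop K K' α B σ f₁ w - Qop K K' α B σ f₂ w| :=
          ENNReal.ofReal_mul hw0.le
      _ ≤ ENNReal.ofReal w * ((inn1 K α B σ φg φ1 w + inn1 K α B σ φ2 φg w) +
            (ENNReal.ofReal c0 * (inn2 K' α B σ φg φ1 w + inn2 K' α B σ φ2 φg w) +
             (inn3 α B σ φg φ1 w + inn3 α B σ φ2 φg w))) := by
          refine mul_le_mul_right (hofReal.trans ?_) _
          exact add_le_add hA (add_le_add (mul_le_mul_right hB _) hC)
      _ = _ := by ring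
  -- split the lintegral of the sum
  have mi1g : Measurable (inn1 K α B σ φg φ1) := meas_inn1 mφg mφ1
  have mi1f : Measurable (inn1 K α B σ φ2 φg) := meas_inn1 mφ2 mφg
  have mi2g : Measurable (inn2 K' α B σ φg φ1) := meas_inn2 mφg mφ1
  have mi2f : Measurable (inn2 K' α B σ φ2 φg) := meas_inn2 mφ2 mφg
  have mi3g : Measurable (inn3 α B σ φg φ1) := meas_inn3 mφg mφ1
  have mi3f : Measurable (inn3 α B σ φ2 φg) := meas_inn3 mφ2 mφg
  have step1 : (∫⁻ w in Ioi (0:ℝ),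
      ENNReal.ofReal (w * |Qop K K' α B σ f₁ w - Qop K K' α B σ f₂ w|)) ≤
      ((∫⁻ w in Ioi (0:ℝ), ENNReal.ofReal w * inn1 K α B σ φg φ1 w) +
        (∫⁻ w in Ioi (0:ℝ), ENNReal.ofReal w * inn1 K α B σ φ2 φg w)) +
      ((ENNReal.ofReal c0 * (∫⁻ w in Ioi (0:ℝ), ENNReal.ofReal w * inn2 K' α B σ φg φ1 w) +
        ENNReal.ofReal c0 * (∫⁻ w in Ioi (0:ℝ), ENNReal.ofReal w * inn2 K' α B σ φ2 φg w)) +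
       ((∫⁻ w in Ioi (0:ℝ), ENNReal.ofReal w * inn3 α B σ φg φ1 w) +
        (∫⁻ w in Ioi (0:ℝ), ENNReal.ofReal w * inn3 α B σ φ2 φg w))) := by
    refine (lintegral_mono_ae hptwise).trans (le_of_eq ?_)
    rw [lintegral_add_left (by fun_prop : Measurable fun w =>
        ENNReal.ofReal w * inn1 K α B σ φg φ1 w + ENNReal.ofReal w * inn1 K α B σ φ2 φg w),
      lintegral_add_left (by fun_prop : Measurable fun w =>
        ENNReal.ofReal w * inn1 K α B σ φg φ1 w),
      lintegral_add_left (by fun_prop : Measurable fun w =>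
        ENNReal.ofReal c0 * (ENNReal.ofReal w * inn2 K' α B σ φg φ1 w) +
          ENNReal.ofReal c0 * (ENNReal.ofReal w * inn2 K' α B σ φ2 φg w)),
      lintegral_add_left (by fun_prop : Measurable fun w =>
        ENNReal.ofReal c0 * (ENNReal.ofReal w * inn2 K' α B σ φg φ1 w)),
      lintegral_add_left (by fun_prop : Measurable fun w =>
        ENNReal.ofReal w * inn3 α B σ φg φ1 w),
      lintegral_const_mul' _ _ ENNReal.ofReal_ne_top,
      lintegral_const_mul' _ _ ENNReal.ofReal_ne_top]
  -- final computation
  have main : (∫⁻ w in Ioi (0:ℝ),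
      ENNReal.ofReal (w * |Qop K K' α B σ f₁ w - Qop K K' α B σ f₂ w|)) ≤
      ENNReal.ofReal (Ctot * M * ∫ w in Ioi (0:ℝ), w * |f₁ w - f₂ w|) := by
    refine step1.trans ?_
    have hconst : ENNReal.ofReal Ctot =
        ENNReal.ofReal C1g + ENNReal.ofReal C1f +
          (ENNReal.ofReal c0 * ENNReal.ofReal C2g + ENNReal.ofReal c0 * ENNReal.ofReal C2f) +
          (ENNReal.ofReal C3g + ENNReal.ofReal C3f) := by
      have n2g : (0:ℝ) ≤ c0 * C2g := (mul_pos hc0 hC2g).le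
      have n2f : (0:ℝ) ≤ c0 * C2f := (mul_pos hc0 hC2f).le
      rw [hCtotdef,
        ENNReal.ofReal_add (by nlinarith [hC1g.le, hC1f.le] : (0:ℝ) ≤ C1g + C1f + (c0 * C2g + c0 * C2f))
          (by nlinarith [hC3g.le, hC3f.le] : (0:ℝ) ≤ C3g + C3f),
        ENNReal.ofReal_add (by nlinarith [hC1g.le, hC1f.le] : (0:ℝ) ≤ C1g + C1f)
          (by nlinarith : (0:ℝ) ≤ c0 * C2g + c0 * C2f),
        ENNReal.ofReal_add hC1g.le hC1f.le,
        ENNReal.ofReal_add n2g n2f,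
        ENNReal.ofReal_add hC3g.le hC3f.le,
        ENNReal.ofReal_mul hc0.le, ENNReal.ofReal_mul hc0.le]
    have htot : ((ENNReal.ofReal C1g * ENNReal.ofReal M) * Ng +
          (ENNReal.ofReal C1f * ENNReal.ofReal M) * Ng) +
        ((ENNReal.ofReal c0 * ((ENNReal.ofReal C2g * ENNReal.ofReal M) * Ng) +
          ENNReal.ofReal c0 * ((ENNReal.ofReal C2f * ENNReal.ofReal M) * Ng)) +
         ((ENNReal.ofReal C3g * ENNReal.ofReal M) * Ng +
          (ENNReal.ofReal C3f * ENNReal.ofReal M) * Ng)) =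
        ENNReal.ofReal (Ctot * M * ∫ w in Ioi (0:ℝ), w * |f₁ w - f₂ w|) := by
      have hfactor : ((ENNReal.ofReal C1g * ENNReal.ofReal M) * Ng +
          (ENNReal.ofReal C1f * ENNReal.ofReal M) * Ng) +
        ((ENNReal.ofReal c0 * ((ENNReal.ofReal C2g * ENNReal.ofReal M) * Ng) +
          ENNReal.ofReal c0 * ((ENNReal.ofReal C2f * ENNReal.ofReal M) * Ng)) +
         ((ENNReal.ofReal C3g * ENNReal.ofReal M) * Ng +
          (ENNReal.ofReal C3f * ENNReal.ofReal M) * Ng)) =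
        (ENNReal.ofReal C1g + ENNReal.ofReal C1f +
          (ENNReal.ofReal c0 * ENNReal.ofReal C2g + ENNReal.ofReal c0 * ENNReal.ofReal C2f) +
          (ENNReal.ofReal C3g + ENNReal.ofReal C3f)) * (ENNReal.ofReal M * Ng) := by ring
      rw [hfactor, ← hconst, hNg, ← ENNReal.ofReal_mul hM.le,
        ← ENNReal.ofReal_mul hCtot.le, ← mul_assoc]
    rw [← htot]
    refine add_le_add (add_le_add E1g E1f) (add_le_add
      (add_le_add (mul_le_mul_right E2g _) (mul_le_mul_right E2f _))
      (add_le_add E3g E3f))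
  -- conclude
  have hnnae : ∀ᵐ w ∂(volume.restrict (Ioi (0:ℝ))),
      0 ≤ w * |Qop K K' α B σ f₁ w - Qop K K' α B σ f₂ w| := by
    filter_upwards [ae_restrict_mem measurableSet_Ioi] with w hw
    exact mul_nonneg (le_of_lt hw) (abs_nonneg _)
  have hnng : ∀ᵐ w ∂(volume.restrict (Ioi (0:ℝ))), 0 ≤ w * |f₁ w - f₂ w| := by
    filter_upwards [ae_restrict_mem measurableSet_Ioi] with w hw
    exact mul_nonneg (le_of_lt hw) (abs_nonneg _)
  have hInn : 0 ≤ ∫ w in Ioi (0:ℝ), w * |f₁ w - f₂ w| := integral_nonneg_of_ae hnng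
  calc ∫ w in Ioi (0:ℝ), w * |Qop K K' α B σ f₁ w - Qop K K' α B σ f₂ w|
      ≤ (∫⁻ w in Ioi (0:ℝ),
          ENNReal.ofReal (w * |Qop K K' α B σ f₁ w - Qop K K' α B σ f₂ w|)).toReal :=
        integral_le_toReal_lintegral _ _ hnnae
    _ ≤ (ENNReal.ofReal (Ctot * M * ∫ w in Ioi (0:ℝ), w * |f₁ w - f₂ w|)).toReal :=
        ENNReal.toReal_mono ENNReal.ofReal_ne_top main
    _ = Ctot * M * ∫ w in Ioi (0:ℝ), w * |f₁ w - f₂ w| :=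
        ENNReal.toReal_ofReal (mul_nonneg (mul_nonneg hCtot.le hM.le) hInn)
end

section
/- Let B > σ > 0 with 0 < B − σ < 1 < B + σ. If f : (0,∞) → [0,∞) is Lebesgue measurable and f(w)·f(rw) = 0 for almost every pair (r,w) ∈ [B−σ, B+σ] × (0,∞) with respect to two-dimensional Lebesgue measure, then f = 0 almost everywhere on (0,∞). -/
open Set MeasureTheory Filter Topology

/-!
If `f w ≠ 0`, the condition forces `f (r w) = 0` for a.e. `r ∈ [B − σ, B + σ]`, i.e. `f = 0`
a.e. on `[(B − σ) w, (B + σ) w]`, which is a neighbourhood of `w` because `B − σ < 1 < B + σ`.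
So a.e. point of `{f ≠ 0}` has a neighbourhood meeting `{f ≠ 0}` in a null set, and by second
countability `{f ≠ 0}` is null.
-/

theorem ae_not_of_ae_exists_nhds_ae_not {α : Type*} [TopologicalSpace α]
    [SecondCountableTopology α] [MeasurableSpace α] {μ : Measure α} {p : α → Prop}
    (h : ∀ᵐ x ∂μ, p x → ∃ u ∈ 𝓝 x, ∀ᵐ y ∂μ, y ∈ u → ¬ p y) :
    ∀ᵐ x ∂μ, ¬ p x := by
  set s := {x | p x ∧ ∃ u ∈ 𝓝 x, ∀ᵐ y ∂μ, y ∈ u → ¬ p y}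
  have hs : μ s = 0 := by
    refine measure_null_of_locally_null s fun x ⟨_, u, hu, hu_null⟩ ↦
      ⟨s ∩ u, inter_mem_nhdsWithin s hu, measure_mono_null ?_ (ae_iff.mp hu_null)⟩
    rintro y ⟨⟨hpy, -⟩, hyu⟩ hy
    exact hy hyu hpy
  rw [ae_iff]
  refine measure_mono_null (fun x hx ↦ ?_) (measure_union_null hs (ae_iff.mp h))
  by_cases hx' : p x → ∃ u ∈ 𝓝 x, ∀ᵐ y ∂μ, y ∈ u → ¬ p y
  · exact Or.inl ⟨not_not.mp hx, hx' (not_not.mp hx)⟩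
  · exact Or.inr hx'

theorem exists_nhds_ae_of_ae_restrict_Icc_mul {a b w : ℝ} (ha : a < 1) (hb : 1 < b) (hw : w ≠ 0)
    {q : ℝ → Prop} (h : ∀ᵐ r ∂volume.restrict (Icc a b), q (r * w)) :
    ∃ u ∈ 𝓝 w, ∀ᵐ y, y ∈ u → q y := by
  refine ⟨(w⁻¹ * ·) ⁻¹' Icc a b, ?_, ?_⟩
  · apply (continuous_const_mul w⁻¹).continuousAt.preimage_mem_nhds
    rw [inv_mul_cancel₀ hw]
    exact Icc_mem_nhds ha hb
  · rw [ae_restrict_iff' measurableSet_Icc] at h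
    filter_upwards [(Measure.quasiMeasurePreserving_smul volume (inv_ne_zero hw)).ae h]
      with y hy hyu
    simpa [smul_eq_mul, inv_mul_cancel_right₀ hw, mul_comm w⁻¹ y, mul_assoc] using hy hyu

theorem trivial_steady_state_general (B σ : ℝ)
    (h1 : B - σ < 1) (h2 : 1 < B + σ)
    (f : ℝ → ℝ) (hf : Measurable f)
    (hcond : ∀ᵐ p : ℝ × ℝ ∂(volume.restrict ((Icc (B - σ) (B + σ)) ×ˢ (Ioi 0))),
      f p.2 * f (p.1 * p.2) = 0) :
    ∀ᵐ w ∂(volume.restrict (Ioi (0 : ℝ))), f w = 0 := by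
  have hfiber : ∀ᵐ w ∂volume.restrict (Ioi (0 : ℝ)),
      ∀ᵐ r ∂volume.restrict (Icc (B - σ) (B + σ)), f w * f (r * w) = 0 := by
    rw [Measure.volume_eq_prod, ← Measure.prod_restrict] at hcond
    refine (Measure.ae_ae_comm ?_).mp (Measure.ae_ae_of_ae_prod hcond)
    exact measurableSet_eq_fun ((hf.comp measurable_snd).mul (hf.comp measurable_mul))
      measurable_const
  rw [ae_restrict_iff' measurableSet_Ioi] at hfiber ⊢
  suffices ∀ᵐ w, ¬ (0 < w ∧ f w ≠ 0) by
    filter_upwards [this] with w hw hw0 using not_not.mp fun hfw ↦ hw ⟨hw0, hfw⟩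
  refine ae_not_of_ae_exists_nhds_ae_not ?_
  filter_upwards [hfiber] with w hw ⟨hw0, hfw⟩
  have hzero : ∀ᵐ r ∂volume.restrict (Icc (B - σ) (B + σ)), f (r * w) = 0 := by
    filter_upwards [hw hw0] with r hr using (mul_eq_zero.mp hr).resolve_left hfw
  obtain ⟨u, hu, hu_zero⟩ :=
    exists_nhds_ae_of_ae_restrict_Icc_mul (q := (f · = 0)) h1 h2 hw0.ne' hzero
  exact ⟨u, hu, by filter_upwards [hu_zero] with y hy hyu ⟨_, hfy⟩ using hfy (hy hyu)⟩

/-- Only the trivial steady state when the feeding interval contains the ratio 1: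
if `0 < B − σ < 1 < B + σ` and a measurable nonnegative `f : (0,∞) → [0,∞)` satisfies
`f(w)·f(rw) = 0` for a.e. `(r,w) ∈ [B−σ, B+σ] × (0,∞)` (two-dimensional Lebesgue
measure), then `f = 0` a.e. on `(0,∞)`. -/
theorem trivial_steady_state (B σ : ℝ) (hσ : 0 < σ) (hσB : σ < B)
    (h1 : B - σ < 1) (h2 : 1 < B + σ)
    (f : ℝ → ℝ) (hf : Measurable f) (hnn : ∀ w, 0 < w → 0 ≤ f w)
    (hcond : ∀ᵐ p : ℝ × ℝ ∂(volume.restrict ((Icc (B - σ) (B + σ)) ×ˢ (Ioi 0))),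
      f p.2 * f (p.1 * p.2) = 0) :
    ∀ᵐ w ∂(volume.restrict (Ioi (0 : ℝ))), f w = 0 :=
  trivial_steady_state_general B σ h1 h2 f hf hcond
end

section
/- Let K ∈ (0,1), K' > 0, α ∈ ℝ, and set γ := −(α+3)/2 and g(w) := w^γ for w > 0. Then for all r > 0 and all w > 0 the stationary identity holds: r^α·(r+K)^(−α−2)·g(wr/(r+K))·g(w/(r+K)) + (1−K)·K'^(−3−α)·r^α·g(w/K')·g(wr/K') − r^(−2)·g(w)·g(w/r) − r^α·g(w)·g(rw) = 0. In other words, the power law w ↦ w^(−(α+3)/2) annihilates the bracket in the ratio formulation of the size-spectrum equation for every feeding ratio r. -/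
/-!
Write `γ = -(α + 3)/2`, so that `α = -2γ - 3`. Every real power in the bracket then splits
into integer powers of `w ^ γ`, `r ^ γ`, `(r + K) ^ γ`, `K' ^ γ` and of `r`, `r + K`, and the
bracket becomes `(w ^ γ)² (r ^ γ)⁻¹ r⁻³ ((r + K) + (1 - K) - r - 1) = 0`.
-/

open Set Real

lemma Real.rpow_eq_zpow_mul_zpow {x e γ : ℝ} (hx : 0 < x) (m n : ℤ) (he : e = m * γ + n) :
    x ^ e = (x ^ γ) ^ m * x ^ n := by
  rw [he, rpow_add hx, rpow_intCast, mul_comm (m : ℝ), rpow_mul hx.le, rpow_intCast]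

/-- The power law `g(w) = w^(−(α+3)/2)` annihilates the bracket in the ratio
formulation of the size-spectrum equation for every feeding ratio `r > 0` and every
body size `w > 0` (real powers throughout). -/
theorem powerlaw_stationary (K K' α : ℝ) (hK : K ∈ Ioo (0 : ℝ) 1) (hK' : 0 < K') :
    ∀ g : ℝ → ℝ, (∀ w : ℝ, g w = w ^ (-(α + 3) / 2)) →
    ∀ r : ℝ, 0 < r → ∀ w : ℝ, 0 < w →
      r ^ α * (r + K) ^ (-α - 2) * g (w * r / (r + K)) * g (w / (r + K))
        + (1 - K) * K' ^ (-3 - α) * r ^ α * g (w / K') * g (w * r / K')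
        - r ^ (-2 : ℝ) * g w * g (w / r)
        - r ^ α * g w * g (r * w) = 0 := by
  intro g hg r hr w hw
  have hrK : 0 < r + K := by linarith [hK.1]
  set γ := -(α + 3) / 2 with hγ
  simp only [hg]
  rw [div_rpow (by positivity) hrK.le, div_rpow hw.le hrK.le, div_rpow hw.le hK'.le,
    div_rpow (by positivity) hK'.le, div_rpow hw.le hr.le, mul_rpow hw.le hr.le,
    mul_rpow hr.le hw.le, rpow_neg_ofNat,
    rpow_eq_zpow_mul_zpow (γ := γ) hr (-2) (-3) (by push_cast; linarith),
    rpow_eq_zpow_mul_zpow (γ := γ) hrK 2 1 (by push_cast; linarith),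
    rpow_eq_zpow_mul_zpow (γ := γ) hK' 2 0 (by push_cast; linarith)]
  have hr_γ : r ^ γ ≠ 0 := (rpow_pos_of_pos hr γ).ne'
  have hrK_γ : (r + K) ^ γ ≠ 0 := (rpow_pos_of_pos hrK γ).ne'
  have hK'_γ : K' ^ γ ≠ 0 := (rpow_pos_of_pos hK' γ).ne'
  field_simp
  ring
end
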